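/- arXiv:2402.10006 — 7 statements merged into one kernel-verified Lean document; each statement's English description precedes it below -/
import Mathlib

section
/- Let η ≥ 1 be a real number, ω ∈ ℂ, and let (λ_j)_{j≥1} be a sequence of real numbers for which there exists ρ > 0 with |λ_j| ≤ ρ j for all j ≥ 1. Then the following two conditions are equivalent: (i) for each ε > 0 there exists a constant C_ε > 0 such that |τ − ω λ_j| ≥ C_ε · exp(−ε (|τ| + j)^{1/η}) for all τ ∈ ℤ and all j ≥ 1; (ii) for each δ > 0 there exists a constant C_δ > 0 such that |1 − e^{2πi ω λ_j}| ≥ C_δ · exp(−δ j^{1/η}) for all j ≥ 1. -/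
/-! The quantity `‖1 - e^{2πiz}‖` is comparable to `min 1 ‖z - n‖` for the nearest integer `n`:
near `n` the map behaves like `2πi(z - n)`; for `Im z ≤ 1` the factorisation
`1 - e^{2πiz} = -2i e^{πiz} sin(πz)` and `|sin(πw)| ≥ 2|w|` on `|Re w| ≤ 1/2` bound it below,
and for `Im z ≥ 1` one has `|e^{2πiz}| ≤ e^{-2π}`. So (ii) follows from (i) applied at
`τ = round (Re (ω λ_j))`, for which `|τ| + j ≤ K j` by the linear growth of `λ_j`, and
`(K j)^{1/η} ≤ K j^{1/η}` since `1/η ≤ 1`; conversely (i) follows from (ii) since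
`j^{1/η} ≤ (|τ| + j)^{1/η}`. -/

open Real

open scoped Complex

open Complex in
theorem one_sub_exp_two_pi_I_mul (w : ℂ) :
    1 - cexp (2 * π * I * w) = -2 * I * cexp (π * I * w) * Complex.sin (π * w) := by
  have h₁ : cexp (π * I * w) * cexp (-(π * w) * I) = 1 := by
    rw [← Complex.exp_add, ← Complex.exp_zero]; ring_nf
  have h₂ : cexp (π * I * w) * cexp (π * w * I) = cexp (2 * π * I * w) := by
    rw [← Complex.exp_add]; ring_nf
  rw [Complex.sin]
  linear_combination I ^ 2 * h₁ - I ^ 2 * h₂ + (1 - cexp (2 * π * I * w)) * I_mul_I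

theorem Complex.norm_sin_sq (w : ℂ) :
    ‖Complex.sin w‖ ^ 2 = Real.sin w.re ^ 2 + Real.sinh w.im ^ 2 := by
  rw [Complex.sq_norm, Complex.sin_eq, ← Complex.ofReal_sin, ← Complex.ofReal_cosh,
    ← Complex.ofReal_cos, ← Complex.ofReal_sinh, ← Complex.ofReal_mul, ← Complex.ofReal_mul,
    Complex.normSq_add_mul_I]
  nlinarith [Real.sin_sq_add_cos_sq w.re, Real.cosh_sq w.im]

theorem Real.sq_le_sinh_sq (x : ℝ) : x ^ 2 ≤ Real.sinh x ^ 2 := by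
  rw [← sq_abs x, ← sq_abs (Real.sinh x), Real.abs_sinh]
  have := Real.self_le_sinh_iff.2 (abs_nonneg x)
  gcongr

theorem two_mul_norm_le_norm_sin_pi_mul {w : ℂ} (hw : |w.re| ≤ 1 / 2) :
    2 * ‖w‖ ≤ ‖Complex.sin (π * w)‖ := by
  have hsin : 2 * |w.re| ≤ |Real.sin (π * w.re)| := by
    have h := Real.mul_abs_le_abs_sin (x := π * w.re) (by
      rw [abs_mul, abs_of_pos pi_pos]; nlinarith [pi_pos])
    rwa [abs_mul, abs_of_pos pi_pos, ← mul_assoc, div_mul_cancel₀ _ pi_ne_zero] at h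
  have hsinh : 4 * w.im ^ 2 ≤ Real.sinh (π * w.im) ^ 2 := by
    have hπ : (4 : ℝ) ≤ π ^ 2 := by nlinarith [Real.pi_gt_three]
    nlinarith [Real.sq_le_sinh_sq (π * w.im), mul_le_mul_of_nonneg_right hπ (sq_nonneg w.im)]
  have hw2 : ‖w‖ ^ 2 = w.re ^ 2 + w.im ^ 2 := by
    rw [Complex.sq_norm, Complex.normSq_apply]; ring
  rw [← pow_le_pow_iff_left₀ (by positivity) (norm_nonneg _) two_ne_zero, mul_pow, hw2,
    Complex.norm_sin_sq]
  simp only [Complex.re_ofReal_mul, Complex.im_ofReal_mul]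
  nlinarith [sq_abs w.re, sq_abs (Real.sin (π * w.re)), abs_nonneg w.re]

theorem four_mul_exp_neg_pi_mul_norm_le {w : ℂ} (hre : |w.re| ≤ 1 / 2) (him : w.im ≤ 1) :
    4 * rexp (-π) * ‖w‖ ≤ ‖1 - cexp (2 * π * Complex.I * w)‖ := by
  have hnorm : ‖1 - cexp (2 * π * Complex.I * w)‖
      = 2 * rexp (-(π * w.im)) * ‖Complex.sin (π * w)‖ := by
    rw [one_sub_exp_two_pi_I_mul, norm_mul, norm_mul, Complex.norm_exp]
    simp [Complex.mul_re]
  have hexp : rexp (-π) ≤ rexp (-(π * w.im)) := by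
    gcongr; nlinarith [pi_pos]
  calc 4 * rexp (-π) * ‖w‖ = 2 * rexp (-π) * (2 * ‖w‖) := by ring
    _ ≤ 2 * rexp (-(π * w.im)) * ‖Complex.sin (π * w)‖ := by
      gcongr; exact two_mul_norm_le_norm_sin_pi_mul hre
    _ = _ := hnorm.symm

theorem one_sub_exp_neg_two_pi_le_norm {z : ℂ} (him : 1 ≤ z.im) :
    1 - rexp (-(2 * π)) ≤ ‖1 - cexp (2 * π * Complex.I * z)‖ := by
  have hnorm : ‖cexp (2 * π * Complex.I * z)‖ = rexp (-(2 * π * z.im)) := by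
    rw [Complex.norm_exp]; simp [Complex.mul_re]
  have hexp : rexp (-(2 * π * z.im)) ≤ rexp (-(2 * π)) := by
    rw [Real.exp_le_exp]; nlinarith [pi_pos]
  have htri := norm_sub_norm_le (1 : ℂ) (cexp (2 * π * Complex.I * z))
  rw [norm_one, hnorm] at htri
  linarith

theorem norm_one_sub_exp_two_pi_I_mul_le {w : ℂ} (hw : 2 * π * ‖w‖ ≤ 1) :
    ‖1 - cexp (2 * π * Complex.I * w)‖ ≤ 4 * π * ‖w‖ := by
  have hnorm : ‖2 * π * Complex.I * w‖ = 2 * π * ‖w‖ := by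
    simp [abs_of_pos pi_pos]
  rw [norm_sub_rev]
  calc ‖cexp (2 * π * Complex.I * w) - 1‖ ≤ 2 * ‖2 * π * Complex.I * w‖ :=
        Complex.norm_exp_sub_one_le (hnorm ▸ hw)
    _ = 4 * π * ‖w‖ := by rw [hnorm]; ring

theorem exp_two_pi_I_mul_sub_intCast (z : ℂ) (n : ℤ) :
    cexp (2 * π * Complex.I * (z - n)) = cexp (2 * π * Complex.I * z) := by
  rw [← (Complex.exp_periodic.int_mul n).sub_eq (2 * π * Complex.I * z)]
  ring_nf

theorem abs_round_le {α : Type*} [Field α] [LinearOrder α] [IsStrictOrderedRing α] [FloorRing α]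
    (x : α) : |(round x : α)| ≤ |x| + 1 / 2 := by
  have h₁ := abs_sub_round x
  have h₂ := abs_sub_abs_le_abs_sub (round x : α) x
  rw [abs_sub_comm] at h₂
  linarith

theorem Real.rpow_le_mul_rpow_of_le_mul {x y K p : ℝ} (hx : 0 ≤ x) (hy : 0 ≤ y) (hK : 1 ≤ K)
    (hp₀ : 0 ≤ p) (hp₁ : p ≤ 1) (h : x ≤ K * y) : x ^ p ≤ K * y ^ p :=
  calc x ^ p ≤ (K * y) ^ p := Real.rpow_le_rpow hx h hp₀
    _ = K ^ p * y ^ p := Real.mul_rpow (by linarith) hy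
    _ ≤ K * y ^ p := by gcongr; exact Real.rpow_le_self_of_one_le hK hp₁

theorem min_one_mul_le_min_one_mul {C E : ℝ} (hE₀ : 0 ≤ E) (hE₁ : E ≤ 1) :
    min 1 C * E ≤ min 1 (C * E) :=
  le_min ((mul_le_mul_of_nonneg_right (min_le_left _ _) hE₀).trans (by linarith))
    (mul_le_mul_of_nonneg_right (min_le_right _ _) hE₀)

theorem exists_pos_mul_min_one_norm_sub_round_le :
    ∃ c > 0, ∀ z : ℂ, c * min 1 ‖z - round z.re‖ ≤ ‖1 - cexp (2 * π * Complex.I * z)‖ := by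
  have hc : 0 < 1 - rexp (-(2 * π)) := by
    rw [sub_pos, Real.exp_lt_one_iff]; linarith [pi_pos]
  refine ⟨min (1 - rexp (-(2 * π))) (4 * rexp (-π)), by positivity, fun z => ?_⟩
  rcases le_or_gt 1 z.im with him | him
  · calc _ ≤ (1 - rexp (-(2 * π))) * 1 :=
          mul_le_mul (min_le_left _ _) (min_le_left _ _) (by positivity) hc.le
      _ ≤ _ := by rw [mul_one]; exact one_sub_exp_neg_two_pi_le_norm him
  · have hre : |(z - round z.re).re| ≤ 1 / 2 := by simpa using abs_sub_round z.re
    have him' : (z - round z.re).im ≤ 1 := by simpa using him.le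
    calc _ ≤ 4 * rexp (-π) * ‖z - round z.re‖ :=
          mul_le_mul (min_le_right _ _) (min_le_right _ _) (by positivity) (by positivity)
      _ ≤ _ := (four_mul_exp_neg_pi_mul_norm_le hre him').trans_eq
          (by rw [exp_two_pi_I_mul_sub_intCast])

theorem exists_pos_mul_min_one_norm_one_sub_exp_two_pi_I_mul_le :
    ∃ c > 0, ∀ (z : ℂ) (n : ℤ), c * min 1 ‖1 - cexp (2 * π * Complex.I * z)‖ ≤ ‖z - n‖ := by
  refine ⟨1 / (4 * π), by positivity, fun z n => ?_⟩
  rcases le_or_gt (2 * π * ‖z - n‖) 1 with h | h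
  · have hle := norm_one_sub_exp_two_pi_I_mul_le h
    rw [exp_two_pi_I_mul_sub_intCast] at hle
    calc _ ≤ 1 / (4 * π) * ‖1 - cexp (2 * π * Complex.I * z)‖ := by
          gcongr; exact min_le_right _ _
      _ ≤ ‖z - n‖ := by
          rw [div_mul_eq_mul_div, one_mul, div_le_iff₀ (by positivity)]; linarith
  · calc _ ≤ 1 / (4 * π) * 1 := by gcongr; exact min_le_left _ _
      _ ≤ ‖z - n‖ := by
          rw [mul_one, div_le_iff₀ (by positivity)]; nlinarith [pi_pos]

section Diophantine

variable {z : ℕ → ℂ} {p : ℝ}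

theorem exp_diophantine_of_diophantine {R : ℝ} (hp₀ : 0 ≤ p) (hp₁ : p ≤ 1)
    (hz : ∀ j : ℕ, 1 ≤ j → ‖z j‖ ≤ R * j)
    (h : ∀ ε > (0 : ℝ), ∃ C > (0 : ℝ), ∀ (τ : ℤ) (j : ℕ), 1 ≤ j →
      C * rexp (-ε * (|(τ : ℝ)| + j) ^ p) ≤ ‖(τ : ℂ) - z j‖) :
    ∀ δ > (0 : ℝ), ∃ C > (0 : ℝ), ∀ j : ℕ, 1 ≤ j →
      C * rexp (-δ * (j : ℝ) ^ p) ≤ ‖1 - cexp (2 * π * Complex.I * z j)‖ := by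
  intro δ hδ
  obtain ⟨c, hc, hc_le⟩ := exists_pos_mul_min_one_norm_sub_round_le
  obtain ⟨C, hC, hC_le⟩ := h (δ / (|R| + 2)) (by positivity)
  refine ⟨c * min 1 C, by positivity, fun j hj => ?_⟩
  set τ := round (z j).re
  have hj₁ : (1 : ℝ) ≤ j := by exact_mod_cast hj
  have hτj : |(τ : ℝ)| + j ≤ (|R| + 2) * j := by
    have hτ := abs_round_le (z j).re
    have hre := (Complex.abs_re_le_norm (z j)).trans
      ((hz j hj).trans (mul_le_mul_of_nonneg_right (le_abs_self R) (by positivity)))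
    nlinarith
  have hexp : rexp (-δ * (j : ℝ) ^ p) ≤ rexp (-(δ / (|R| + 2)) * (|(τ : ℝ)| + j) ^ p) := by
    rw [Real.exp_le_exp, neg_mul, neg_mul, neg_le_neg_iff]
    calc δ / (|R| + 2) * (|(τ : ℝ)| + j) ^ p ≤ δ / (|R| + 2) * ((|R| + 2) * (j : ℝ) ^ p) := by
          gcongr
          exact Real.rpow_le_mul_rpow_of_le_mul (by positivity) (by positivity)
            (by linarith [abs_nonneg R]) hp₀ hp₁ hτj
      _ = δ * (j : ℝ) ^ p := by field_simp
  have hexp_le_one : rexp (-δ * (j : ℝ) ^ p) ≤ 1 := by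
    rw [Real.exp_le_one_iff, neg_mul, neg_nonpos]; positivity
  calc c * min 1 C * rexp (-δ * (j : ℝ) ^ p)
      ≤ c * min 1 (C * rexp (-δ * (j : ℝ) ^ p)) := by
        rw [mul_assoc]; gcongr; exact min_one_mul_le_min_one_mul (by positivity) hexp_le_one
    _ ≤ c * min 1 ‖(τ : ℂ) - z j‖ := by
        gcongr; exact (mul_le_mul_of_nonneg_left hexp hC.le).trans (hC_le τ j hj)
    _ ≤ _ := by rw [norm_sub_rev]; exact hc_le (z j)

theorem diophantine_of_exp_diophantine (hp₀ : 0 ≤ p)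
    (h : ∀ δ > (0 : ℝ), ∃ C > (0 : ℝ), ∀ j : ℕ, 1 ≤ j →
      C * rexp (-δ * (j : ℝ) ^ p) ≤ ‖1 - cexp (2 * π * Complex.I * z j)‖) :
    ∀ ε > (0 : ℝ), ∃ C > (0 : ℝ), ∀ (τ : ℤ) (j : ℕ), 1 ≤ j →
      C * rexp (-ε * (|(τ : ℝ)| + j) ^ p) ≤ ‖(τ : ℂ) - z j‖ := by
  intro ε hε
  obtain ⟨c, hc, hc_le⟩ := exists_pos_mul_min_one_norm_one_sub_exp_two_pi_I_mul_le
  obtain ⟨C, hC, hC_le⟩ := h ε hε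
  refine ⟨c * min 1 C, by positivity, fun τ j hj => ?_⟩
  have hexp : rexp (-ε * (|(τ : ℝ)| + j) ^ p) ≤ rexp (-ε * (j : ℝ) ^ p) := by
    rw [Real.exp_le_exp, neg_mul, neg_mul, neg_le_neg_iff]
    gcongr
    exact le_add_of_nonneg_left (abs_nonneg _)
  have hexp_le_one : rexp (-ε * (|(τ : ℝ)| + j) ^ p) ≤ 1 := by
    rw [Real.exp_le_one_iff, neg_mul, neg_nonpos]; positivity
  calc c * min 1 C * rexp (-ε * (|(τ : ℝ)| + j) ^ p)
      ≤ c * min 1 (C * rexp (-ε * (|(τ : ℝ)| + j) ^ p)) := by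
        rw [mul_assoc]; gcongr; exact min_one_mul_le_min_one_mul (by positivity) hexp_le_one
    _ ≤ c * min 1 ‖1 - cexp (2 * π * Complex.I * z j)‖ := by
        gcongr; exact (mul_le_mul_of_nonneg_left hexp hC.le).trans (hC_le j hj)
    _ ≤ _ := by rw [norm_sub_rev (τ : ℂ)]; exact hc_le (z j) τ

end Diophantine

/-- Lemma 2.5: equivalence of two Diophantine-type conditions for `η ≥ 1`, `ω ∈ ℂ` and a
sequence `(λ_j)` of real numbers of at most linear growth. -/
theorem stmt1 (η : ℝ) (hη : 1 ≤ η) (ω : ℂ) (l : ℕ → ℝ)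
    (hl : ∃ ρ > (0 : ℝ), ∀ j : ℕ, 1 ≤ j → |l j| ≤ ρ * (j : ℝ)) :
    (∀ ε > (0 : ℝ), ∃ C > (0 : ℝ), ∀ (τ : ℤ) (j : ℕ), 1 ≤ j →
        ‖(τ : ℂ) - ω * (l j : ℂ)‖
          ≥ C * Real.exp (-ε * ((|τ| : ℝ) + (j : ℝ)) ^ (1 / η)))
    ↔
    (∀ δ > (0 : ℝ), ∃ C > (0 : ℝ), ∀ j : ℕ, 1 ≤ j →
        ‖1 - Complex.exp (2 * Real.pi * Complex.I * ω * (l j : ℂ))‖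
          ≥ C * Real.exp (-δ * (j : ℝ) ^ (1 / η))) := by
  obtain ⟨ρ, -, hρ⟩ := hl
  have hp₀ : 0 ≤ 1 / η := one_div_nonneg.2 (by linarith)
  have hp₁ : 1 / η ≤ 1 := (div_le_one (by linarith)).2 hη
  have hz : ∀ j : ℕ, 1 ≤ j → ‖ω * (l j : ℂ)‖ ≤ ‖ω‖ * ρ * j := fun j hj => by
    rw [norm_mul, Complex.norm_real, Real.norm_eq_abs, mul_assoc]
    exact mul_le_mul_of_nonneg_left (hρ j hj) (norm_nonneg ω)
  simp only [ge_iff_le, mul_assoc (2 * π * Complex.I) ω]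
  exact ⟨exp_diophantine_of_diophantine hp₀ hp₁ hz, diophantine_of_exp_diophantine hp₀⟩
end

section
/- Let c, f : ℝ → ℂ be continuous 2π-periodic functions, let λ ∈ ℝ, and set c₀ = (2π)⁻¹ ∫₀^{2π} c(t) dt. Assume λ c₀ ∈ ℤ. If there exists a differentiable 2π-periodic function u : ℝ → ℂ satisfying u′(t) + i λ c(t) u(t) = i f(t) for all t ∈ ℝ, then ∫₀^{2π} exp(i λ ∫₀ᵗ c(s) ds) f(t) dt = 0. -/
open Real

/-!
Multiplying the equation by the integrating factor `E t = exp (i λ ∫₀ᵗ c)` turns its left-hand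
side into `(E u)'`, so `i ∫₀^{2π} E f = E(2π) u(2π) - E(0) u(0)`. Resonance means
`i λ ∫₀^{2π} c = 2π i m` with `m ∈ ℤ`, hence `E(2π) = 1 = E(0)`, and periodicity of `u` makes
the right-hand side vanish.
-/

theorem hasDerivAt_cexp_mul_primitive {c : ℝ → ℂ} (hc : Continuous c) (k : ℂ) (a t : ℝ) :
    HasDerivAt (fun t => Complex.exp (k * ∫ s in a..t, c s))
      (Complex.exp (k * ∫ s in a..t, c s) * (k * c t)) t :=
  ((intervalIntegral.integral_hasDerivAt_right (hc.intervalIntegrable _ _)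
    (hc.stronglyMeasurableAtFilter _ _) hc.continuousAt).const_mul k).cexp

theorem integral_cexp_primitive_mul_eq_sub {c g u : ℝ → ℂ} (hc : Continuous c)
    (hg : Continuous g) (hu : Differentiable ℝ u) (k : ℂ)
    (hode : ∀ t, deriv u t + k * c t * u t = g t) (a b : ℝ) :
    (∫ t in a..b, Complex.exp (k * ∫ s in (0:ℝ)..t, c s) * g t) =
      Complex.exp (k * ∫ s in (0:ℝ)..b, c s) * u b -
        Complex.exp (k * ∫ s in (0:ℝ)..a, c s) * u a := by
  have hE : Continuous fun t => Complex.exp (k * ∫ s in (0:ℝ)..t, c s) :=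
    Complex.continuous_exp.comp <| continuous_const.mul <|
      intervalIntegral.continuous_primitive (fun a b => hc.intervalIntegrable a b) 0
  refine intervalIntegral.integral_eq_sub_of_hasDerivAt
    (f := fun t => Complex.exp (k * ∫ s in (0:ℝ)..t, c s) * u t) (fun t _ => ?_)
    ((hE.mul hg).intervalIntegrable _ _)
  refine ((hasDerivAt_cexp_mul_primitive hc k 0 t).mul (hu t).hasDerivAt).congr_deriv ?_
  rw [← hode t]
  ring

theorem cexp_I_mul_integral_eq_one_of_resonant {c : ℝ → ℂ} {lam : ℝ}
    (hres : ∃ m : ℤ,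
      (lam : ℂ) * (((2 * π : ℝ) : ℂ)⁻¹ * ∫ t in (0:ℝ)..(2 * π), c t) = (m : ℂ)) :
    Complex.exp (Complex.I * lam * ∫ s in (0:ℝ)..(2 * π), c s) = 1 := by
  obtain ⟨m, hm⟩ := hres
  push_cast at hm
  field_simp at hm
  rw [← Complex.exp_int_mul_two_pi_mul_I m]
  congr 1
  linear_combination Complex.I * hm

theorem stmt3_general (c f : ℝ → ℂ) (hc : Continuous c) (hf : Continuous f)
    (lam : ℝ)
    (hres : ∃ m : ℤ,
      (lam : ℂ) * (((2 * Real.pi : ℝ) : ℂ)⁻¹ * ∫ t in (0:ℝ)..(2 * Real.pi), c t) = (m : ℂ))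
    (u : ℝ → ℂ) (hu : Differentiable ℝ u) (huper : Function.Periodic u (2 * Real.pi))
    (hode : ∀ t : ℝ, deriv u t + Complex.I * (lam : ℂ) * c t * u t = Complex.I * f t) :
    (∫ t in (0:ℝ)..(2 * Real.pi),
        Complex.exp (Complex.I * (lam : ℂ) * ∫ s in (0:ℝ)..t, c s) * f t) = 0 := by
  have key := integral_cexp_primitive_mul_eq_sub (g := fun t => Complex.I * f t) hc
    (by fun_prop) hu _ hode 0 (2 * π)
  rw [cexp_I_mul_integral_eq_one_of_resonant hres, huper.eq] at key
  simp only [intervalIntegral.integral_same, mul_zero, Complex.exp_zero, sub_self,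
    mul_left_comm _ Complex.I, intervalIntegral.integral_const_mul] at key
  exact (mul_eq_zero.mp key).resolve_left Complex.I_ne_zero

/-- Necessity part of Lemma 2.4: in the resonant case `λ c₀ ∈ ℤ`, if the
Fourier-coefficient equation has a `2π`-periodic differentiable solution, then the
compatibility condition on `f` holds. -/
theorem stmt3 (c f : ℝ → ℂ) (hc : Continuous c) (hf : Continuous f)
    (hcper : Function.Periodic c (2 * Real.pi)) (hfper : Function.Periodic f (2 * Real.pi))
    (lam : ℝ)
    (hres : ∃ m : ℤ,
      (lam : ℂ) * (((2 * Real.pi : ℝ) : ℂ)⁻¹ * ∫ t in (0:ℝ)..(2 * Real.pi), c t) = (m : ℂ))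
    (u : ℝ → ℂ) (hu : Differentiable ℝ u) (huper : Function.Periodic u (2 * Real.pi))
    (hode : ∀ t : ℝ, deriv u t + Complex.I * (lam : ℂ) * c t * u t = Complex.I * f t) :
    (∫ t in (0:ℝ)..(2 * Real.pi),
        Complex.exp (Complex.I * (lam : ℂ) * ∫ s in (0:ℝ)..t, c s) * f t) = 0 :=
  stmt3_general c f hc hf lam hres u hu huper hode
end

section
/- Let c, f : ℝ → ℂ be continuous 2π-periodic functions, let λ ∈ ℝ, and set c₀ = (2π)⁻¹ ∫₀^{2π} c(t) dt. Assume λ c₀ ∈ ℤ and ∫₀^{2π} exp(i λ ∫₀ᵗ c(s) ds) f(t) dt = 0. Then the function u(t) = i ∫₀ᵗ exp(i λ ∫ₜ^s c(r) dr) f(s) ds is 2π-periodic and satisfies u′(t) + i λ c(t) u(t) = i f(t) for all t ∈ ℝ. -/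
/-!
Writing `C t = ∫₀ᵗ c`, the function `u` is `i e^{-iλC(t)} ∫₀ᵗ e^{iλC(s)} f(s) ds`, so the ODE is
the product rule for this integrating-factor representation. For periodicity, `C(t + 2π) = C(t)
+ 2π c₀`, and resonance `λ c₀ ∈ ℤ` makes both integrating factors `e^{±iλC}` periodic; the
integrand `e^{iλC} f` is then periodic with zero mean by the compatibility condition, so its
primitive is periodic as well.
-/

open Complex intervalIntegral
open MeasureTheory (volume)
open scoped Real

theorem Function.Periodic.periodic_primitive_of_integral_eq_zero {E : Type*}
    [NormedAddCommGroup E] [NormedSpace ℝ E] {g : ℝ → E} {T : ℝ} (hg : Function.Periodic g T)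
    (hint : ∀ a b, IntervalIntegrable g volume a b) (hmean : ∫ x in 0..T, g x = 0) :
    Function.Periodic (fun t => ∫ x in 0..t, g x) T := fun t => by
  simpa [hmean] using hg.intervalIntegral_add_eq_add 0 t hint

theorem Function.Periodic.periodic_exp_mul_primitive {c : ℝ → ℂ} {T : ℝ}
    (hcper : Function.Periodic c T) (hint : ∀ x y, IntervalIntegrable c volume x y) {a : ℂ}
    (hres : exp (a * ∫ r in 0..T, c r) = 1) :
    Function.Periodic (fun t => exp (a * ∫ r in 0..t, c r)) T := fun t => by
  simp only [hcper.intervalIntegral_add_eq_add 0 t hint, zero_add, mul_add, exp_add, hres,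
    mul_one]

theorem exp_I_mul_eq_one_of_inv_two_pi_mul_eq_int {w : ℂ} {m : ℤ}
    (hw : ((2 * π : ℝ) : ℂ)⁻¹ * w = m) : exp (I * w) = 1 := by
  have hπ : ((2 * π : ℝ) : ℂ) ≠ 0 := by exact_mod_cast Real.two_pi_pos.ne'
  rw [exp_eq_one_iff]
  refine ⟨m, ?_⟩
  rw [← hw]
  field_simp
  push_cast
  ring

section Duhamel

variable (a : ℂ) (c f : ℝ → ℂ)

noncomputable def duhamelSolution (t : ℝ) : ℂ :=
  ∫ s in 0..t, exp (a * ∫ r in t..s, c r) * f s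

variable {a c f}

theorem continuous_exp_mul_primitive_mul (hc : Continuous c) (hf : Continuous f) :
    Continuous fun s => exp (a * ∫ r in 0..s, c r) * f s :=
  ((continuous_const.mul (continuous_primitive (fun _ _ => hc.intervalIntegrable _ _) 0)).cexp).mul
    hf

theorem duhamelSolution_eq (hc : Continuous c) (t : ℝ) :
    duhamelSolution a c f t =
      exp (-a * ∫ r in 0..t, c r) * ∫ s in 0..t, exp (a * ∫ r in 0..s, c r) * f s := by
  rw [duhamelSolution, ← integral_const_mul]
  congr 1 with s
  rw [← integral_interval_sub_left (hc.intervalIntegrable 0 s) (hc.intervalIntegrable 0 t),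
    ← mul_assoc, ← exp_add]
  ring_nf

theorem hasDerivAt_duhamelSolution (hc : Continuous c) (hf : Continuous f) (t : ℝ) :
    HasDerivAt (duhamelSolution a c f) (f t - a * c t * duhamelSolution a c f t) t := by
  have hC : HasDerivAt (fun t => ∫ r in 0..t, c r) (c t) t :=
    integral_hasDerivAt_right (hc.intervalIntegrable _ _)
      hc.aestronglyMeasurable.stronglyMeasurableAtFilter hc.continuousAt
  have hg := continuous_exp_mul_primitive_mul (a := a) hc hf
  have hF := integral_hasDerivAt_right (hg.intervalIntegrable 0 t)
    hg.aestronglyMeasurable.stronglyMeasurableAtFilter hg.continuousAt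
  have hprod := ((hC.const_mul (-a)).cexp).mul hF
  rw [funext (duhamelSolution_eq hc)]
  refine hprod.congr_deriv ?_
  have hinv : exp (-a * ∫ r in 0..t, c r) * exp (a * ∫ r in 0..t, c r) = 1 := by
    rw [← exp_add, neg_mul, neg_add_cancel, exp_zero]
  linear_combination f t * hinv

theorem periodic_duhamelSolution {T : ℝ} (hc : Continuous c) (hf : Continuous f)
    (hcper : Function.Periodic c T) (hfper : Function.Periodic f T)
    (hres : exp (a * ∫ r in 0..T, c r) = 1)
    (hcomp : ∫ s in 0..T, exp (a * ∫ r in 0..s, c r) * f s = 0) :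
    Function.Periodic (duhamelSolution a c f) T := by
  have hint : ∀ x y, IntervalIntegrable c volume x y := fun _ _ => hc.intervalIntegrable _ _
  have hE := hcper.periodic_exp_mul_primitive hint hres
  have hEinv := hcper.periodic_exp_mul_primitive hint (a := -a) <| by
    rw [neg_mul, exp_neg, hres, inv_one]
  have hF := (hE.mul hfper).periodic_primitive_of_integral_eq_zero
    (fun _ _ => (continuous_exp_mul_primitive_mul hc hf).intervalIntegrable _ _) hcomp
  rw [funext (duhamelSolution_eq hc)]
  exact hEinv.mul hF

end Duhamel

/-- Existence part of Lemma 2.4: in the resonant case `λ c₀ ∈ ℤ`, under the compatibility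
condition, the explicit function `u` is `2π`-periodic and solves `u' + i λ c u = i f`. -/
theorem stmt4 (c f : ℝ → ℂ) (hc : Continuous c) (hf : Continuous f)
    (hcper : Function.Periodic c (2 * Real.pi)) (hfper : Function.Periodic f (2 * Real.pi))
    (lam : ℝ)
    (hres : ∃ m : ℤ,
      (lam : ℂ) * (((2 * Real.pi : ℝ) : ℂ)⁻¹ * ∫ t in (0:ℝ)..(2 * Real.pi), c t) = (m : ℂ))
    (hcomp : (∫ t in (0:ℝ)..(2 * Real.pi),
        Complex.exp (Complex.I * (lam : ℂ) * ∫ s in (0:ℝ)..t, c s) * f t) = 0)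
    (u : ℝ → ℂ)
    (hu : ∀ t : ℝ, u t = Complex.I *
        ∫ s in (0:ℝ)..t,
          Complex.exp (Complex.I * (lam : ℂ) * ∫ r in t..s, c r) * f s) :
    Function.Periodic u (2 * Real.pi) ∧
      ∀ t : ℝ, HasDerivAt u (Complex.I * f t - Complex.I * (lam : ℂ) * c t * u t) t := by
  obtain ⟨m, hm⟩ := hres
  have hexp : exp (I * lam * ∫ r in 0..2 * π, c r) = 1 := by
    rw [mul_assoc]
    exact exp_I_mul_eq_one_of_inv_two_pi_mul_eq_int (m := m) (by rw [← hm]; ring)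
  obtain rfl : u = fun t => I * duhamelSolution (I * lam) c f t := funext hu
  refine ⟨fun t => ?_, fun t => ?_⟩
  · simp only [periodic_duhamelSolution hc hf hcper hfper hexp hcomp t]
  · refine ((hasDerivAt_duhamelSolution hc hf t).const_mul I).congr_deriv ?_
    ring
end

section
/- Let c, f : ℝ → ℂ be continuous 2π-periodic functions, let λ ∈ ℝ, and set c₀ = (2π)⁻¹ ∫₀^{2π} c(t) dt. Assume λ c₀ ∉ ℤ (equivalently e^{−2πi λ c₀} ≠ 1). Then there exists exactly one differentiable 2π-periodic function u : ℝ → ℂ satisfying u′(t) + i λ c(t) u(t) = i f(t) for all t ∈ ℝ, and it is given by u(t) = i (1 − e^{−2πi λ c₀})⁻¹ ∫₀^{2π} exp(−i λ ∫_{t−s}^{t} c(r) dr) f(t−s) ds. -/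
/-!
With `B t = ∫₀ᵗ b`, the integrating factor `exp B` turns `u' + b u = g` into
`(exp B · u)' = exp B · g`. A `T`-periodic solution of the homogeneous equation therefore
satisfies `exp (B T) · w 0 = w 0`, so it vanishes unless `exp (B T) = 1`; for `b = iλc` this is
the resonance condition `λ c₀ ∈ ℤ`. Conversely, the explicit formula is
`(1 - exp (-B T))⁻¹ · exp (-B t) ∫_{t-T}^t exp (B σ) g σ dσ`; differentiating it produces
`g t - exp (-(B t - B (t - T))) g t = (1 - exp (-B T)) g t`, which the prefactor cancels.
-/

open Real Function intervalIntegral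

open scoped Complex

noncomputable def periodicSolution (b g : ℝ → ℂ) (T t : ℝ) : ℂ :=
  (1 - cexp (-∫ r in (0:ℝ)..T, b r))⁻¹ *
    ∫ s in (0:ℝ)..T, cexp (-∫ r in (t - s)..t, b r) * g (t - s)

theorem cexp_neg_two_pi_I_mul_ne_one {z : ℂ} (hz : ∀ m : ℤ, z ≠ m) :
    cexp (-(2 * π * Complex.I * z)) ≠ 1 := by
  rw [Complex.exp_neg, inv_ne_one, Ne, Complex.exp_eq_one_iff, not_exists]
  intro m hm
  have h2πI : (2 * π * Complex.I : ℂ) ≠ 0 := by simp [Real.pi_ne_zero]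
  exact hz m (mul_left_cancel₀ h2πI (hm.trans (mul_comm _ _)))

theorem Continuous.hasDerivAt_intervalIntegral_sub_const {E : Type*} [NormedAddCommGroup E]
    [NormedSpace ℝ E] [CompleteSpace E] {h : ℝ → E} (hh : Continuous h) (T t : ℝ) :
    HasDerivAt (fun t => ∫ σ in (t - T)..t, h σ) (h t - h (t - T)) t := by
  have hsplit : (fun t => ∫ σ in (t - T)..t, h σ) =
      fun t => (∫ σ in (0:ℝ)..t, h σ) - ∫ σ in (0:ℝ)..(t - T), h σ := by
    funext t
    rw [integral_interval_sub_left (hh.intervalIntegrable _ _) (hh.intervalIntegrable _ _)]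
  rw [hsplit]
  exact (hh.integral_hasStrictDerivAt 0 t).hasDerivAt.sub
    ((hh.integral_hasStrictDerivAt 0 (t - T)).hasDerivAt.comp_sub_const t T)

section LinearPeriodicODE

variable {b g : ℝ → ℂ} {T : ℝ}

theorem eq_zero_of_hasDerivAt_of_periodic (hb : Continuous b)
    (hres : cexp (-∫ r in (0:ℝ)..T, b r) ≠ 1) {w : ℝ → ℂ}
    (hw : ∀ t, HasDerivAt w (-(b t * w t)) t) (hper : Periodic w T) : w = 0 := by
  have hφ : ∀ t, HasDerivAt (fun t => cexp (∫ r in (0:ℝ)..t, b r) * w t) 0 t := fun t =>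
    ((hb.integral_hasStrictDerivAt 0 t).hasDerivAt.cexp.fun_mul (hw t)).congr_deriv (by ring)
  have hconst := is_const_of_deriv_eq_zero (fun t => (hφ t).differentiableAt)
    fun t => (hφ t).deriv
  have hw0 : w 0 = 0 := by
    have hT := hconst T 0
    rw [integral_same, Complex.exp_zero, one_mul, hper.eq] at hT
    by_contra hne
    have hexpT : cexp (∫ r in (0:ℝ)..T, b r) = 1 :=
      mul_right_cancel₀ hne (hT.trans (one_mul _).symm)
    exact hres (by rw [Complex.exp_neg, hexpT, inv_one])
  funext t
  simpa [hw0] using hconst t 0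

theorem periodicSolution_periodic (hb : Periodic b T) (hg : Periodic g T) :
    Periodic (periodicSolution b g T) T := fun t => by
  have hshift : ∀ s, ∫ r in (t - s + T)..(t + T), b r = ∫ r in (t - s)..t, b r := fun s => by
    rw [← integral_comp_add_right]
    simp only [hb _]
  simp only [periodicSolution, add_sub_right_comm t T, hshift, hg _]

theorem periodicSolution_eq_integral_sub (hb : Continuous b) (t : ℝ) :
    periodicSolution b g T t = (1 - cexp (-∫ r in (0:ℝ)..T, b r))⁻¹ *
      (cexp (-∫ r in (0:ℝ)..t, b r) *
        ∫ σ in (t - T)..t, cexp (∫ r in (0:ℝ)..σ, b r) * g σ) := by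
  have hfactor : ∀ s, cexp (-∫ r in (t - s)..t, b r) * g (t - s) =
      cexp (-∫ r in (0:ℝ)..t, b r) * (cexp (∫ r in (0:ℝ)..(t - s), b r) * g (t - s)) :=
    fun s => by
    rw [← integral_interval_sub_left (hb.intervalIntegrable _ _) (hb.intervalIntegrable _ _),
      ← mul_assoc, ← Complex.exp_add, neg_sub, sub_eq_neg_add]
  simp only [periodicSolution, hfactor, integral_const_mul,
    integral_comp_sub_left (fun σ => cexp (∫ r in (0:ℝ)..σ, b r) * g σ), sub_zero]

theorem hasDerivAt_periodicSolution (hb : Continuous b) (hbper : Periodic b T)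
    (hg : Continuous g) (hgper : Periodic g T) (hres : cexp (-∫ r in (0:ℝ)..T, b r) ≠ 1)
    (t : ℝ) : HasDerivAt (periodicSolution b g T) (g t - b t * periodicSolution b g T t) t := by
  set B : ℝ → ℂ := fun t => ∫ r in (0:ℝ)..t, b r
  have hB : ∀ t, HasDerivAt B (b t) t := fun t => (hb.integral_hasStrictDerivAt 0 t).hasDerivAt
  have hBT : B t - B (t - T) = ∫ r in (0:ℝ)..T, b r := by
    have hperiod := hbper.intervalIntegral_add_eq (t - T) 0
    rwa [sub_add_cancel, zero_add, ← integral_interval_sub_left (hb.intervalIntegrable _ _)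
      (hb.intervalIntegrable _ _)] at hperiod
  have hEB : cexp (-B t) * cexp (B (t - T)) = cexp (-∫ r in (0:ℝ)..T, b r) := by
    rw [← Complex.exp_add, ← hBT, neg_sub, neg_add_eq_sub]
  set E := cexp (-∫ r in (0:ℝ)..T, b r)
  have hexpB : Continuous fun t => cexp (B t) :=
    continuous_iff_continuousAt.2 fun t => (hB t).continuousAt.cexp
  have hint := (hexpB.mul hg).hasDerivAt_intervalIntegral_sub_const T t
  have hU : HasDerivAt
      (fun t => (1 - E)⁻¹ * (cexp (-B t) * ∫ σ in (t - T)..t, cexp (B σ) * g σ))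
      ((1 - E)⁻¹ * (cexp (-B t) * -b t * (∫ σ in (t - T)..t, cexp (B σ) * g σ) +
        cexp (-B t) * (cexp (B t) * g t - cexp (B (t - T)) * g (t - T)))) t :=
    (((hB t).neg.cexp).fun_mul hint).const_mul _
  rw [funext (periodicSolution_eq_integral_sub (g := g) (T := T) hb)]
  convert hU using 1
  have hK : (1 - E)⁻¹ * (1 - E) = 1 := inv_mul_cancel₀ (sub_ne_zero.2 hres.symm)
  have hBB : cexp (-B t) * cexp (B t) = 1 := by
    rw [← Complex.exp_add, neg_add_cancel, Complex.exp_zero]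
  beta_reduce
  rw [hgper.sub_eq]
  linear_combination (-((1 - E)⁻¹ * g t)) * hBB + ((1 - E)⁻¹ * g t) * hEB - g t * hK

end LinearPeriodicODE

/-- Formula (2.8): in the nonresonant case `λ c₀ ∉ ℤ` there is exactly one `2π`-periodic
differentiable solution of `u' + i λ c u = i f`, given by the explicit formula. -/
theorem stmt5 (c f : ℝ → ℂ) (hc : Continuous c) (hf : Continuous f)
    (hcper : Function.Periodic c (2 * Real.pi)) (hfper : Function.Periodic f (2 * Real.pi))
    (lam : ℝ) (c₀ : ℂ)
    (hc₀ : c₀ = ((2 * Real.pi : ℝ) : ℂ)⁻¹ * ∫ t in (0:ℝ)..(2 * Real.pi), c t)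
    (hnres : ∀ m : ℤ, (lam : ℂ) * c₀ ≠ (m : ℂ))
    (U : ℝ → ℂ)
    (hU : ∀ t : ℝ, U t =
      Complex.I * (1 - Complex.exp (-(2 * Real.pi * Complex.I * (lam : ℂ) * c₀)))⁻¹ *
        ∫ s in (0:ℝ)..(2 * Real.pi),
          Complex.exp (-(Complex.I * (lam : ℂ) * ∫ r in (t - s)..t, c r)) * f (t - s)) :
    (Differentiable ℝ U ∧ Function.Periodic U (2 * Real.pi) ∧
      (∀ t : ℝ, deriv U t + Complex.I * (lam : ℂ) * c t * U t = Complex.I * f t)) ∧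
    (∀ u : ℝ → ℂ, Differentiable ℝ u → Function.Periodic u (2 * Real.pi) →
      (∀ t : ℝ, deriv u t + Complex.I * (lam : ℂ) * c t * u t = Complex.I * f t) →
      u = U) := by
  set b : ℝ → ℂ := fun t => Complex.I * lam * c t
  set g : ℝ → ℂ := fun t => Complex.I * f t
  have hb : Continuous b := continuous_const.mul hc
  have hbper : Periodic b (2 * π) := hcper.comp _
  have hg : Continuous g := continuous_const.mul hf
  have hgper : Periodic g (2 * π) := hfper.comp _
  have hmean : ∫ r in (0:ℝ)..(2 * π), b r = 2 * π * Complex.I * lam * c₀ := by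
    rw [integral_const_mul, hc₀]
    push_cast
    field_simp
  have hres : cexp (-∫ r in (0:ℝ)..(2 * π), b r) ≠ 1 := by
    rw [hmean, mul_assoc (2 * π * Complex.I : ℂ)]
    exact cexp_neg_two_pi_I_mul_ne_one hnres
  obtain rfl : U = periodicSolution b g (2 * π) := funext fun t => by
    have hintegrand : ∀ s, cexp (-∫ r in (t - s)..t, b r) * g (t - s) =
        Complex.I * (cexp (-(Complex.I * lam * ∫ r in (t - s)..t, c r)) * f (t - s)) := by
      intro s
      rw [integral_const_mul]
      ring
    rw [hU, periodicSolution, hmean]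
    simp only [hintegrand, integral_const_mul]
    ring
  have hUd := hasDerivAt_periodicSolution hb hbper hg hgper hres
  have hUper := periodicSolution_periodic hbper hgper
  refine ⟨⟨fun t => (hUd t).differentiableAt, hUper, fun t => by rw [(hUd t).deriv]; ring⟩,
    ?_⟩
  intro u hu hper hode
  refine sub_eq_zero.1 (eq_zero_of_hasDerivAt_of_periodic hb hres (fun t => ?_) (hper.sub hUper))
  exact ((hu t).hasDerivAt.sub (hUd t)).congr_deriv
    (by rw [Pi.sub_apply]; linear_combination hode t)
end

section
/- Let c, f : ℝ → ℂ be continuous 2π-periodic functions, let λ ∈ ℝ, and set c₀ = (2π)⁻¹ ∫₀^{2π} c(t) dt. Assume λ c₀ ∉ ℤ. Then the unique differentiable 2π-periodic solution u of u′(t) + i λ c(t) u(t) = i f(t) is also given by the formula u(t) = i (e^{2πi λ c₀} − 1)⁻¹ ∫₀^{2π} exp(i λ ∫ₜ^{t+s} c(r) dr) f(t+s) ds. -/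
/-!
Multiplying by the integrating factor `exp (i λ ∫ₜ^{t+s} c)` turns the equation into
`d/ds [exp (i λ ∫ₜ^{t+s} c) u(t+s)] = exp (i λ ∫ₜ^{t+s} c) · i f(t+s)`. Integrating over one period
`s ∈ [0, 2π]` and using the periodicity of `c` and `u` gives
`(e^{2πi λ c₀} - 1) u(t) = i ∫₀^{2π} exp (i λ ∫ₜ^{t+s} c) f(t+s) ds`,
and the factor `e^{2πi λ c₀} - 1` is nonzero exactly when `λ c₀ ∉ ℤ`.
-/

open Real

theorem hasDerivAt_integral_add {E : Type*} [NormedAddCommGroup E] [NormedSpace ℝ E]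
    [CompleteSpace E] {c : ℝ → E} (hc : Continuous c) (t s : ℝ) :
    HasDerivAt (fun s ↦ ∫ r in t..t + s, c r) (c (t + s)) s :=
  (hc.integral_hasStrictDerivAt t (t + s)).hasDerivAt.comp_const_add t s

section IntegratingFactor

variable {c g u : ℝ → ℂ} (k : ℂ)

theorem hasDerivAt_exp_integral_mul_of_deriv_add_mul_eq (hc : Continuous c)
    (hu : Differentiable ℝ u) (hode : ∀ t, deriv u t + k * c t * u t = g t) (t s : ℝ) :
    HasDerivAt (fun s ↦ Complex.exp (k * ∫ r in t..t + s, c r) * u (t + s))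
      (Complex.exp (k * ∫ r in t..t + s, c r) * g (t + s)) s := by
  have hexp := ((hasDerivAt_integral_add hc t s).const_mul k).cexp
  have hshift := (hu (t + s)).hasDerivAt.comp_const_add t s
  refine (hexp.mul hshift).congr_deriv ?_
  linear_combination Complex.exp (k * ∫ r in t..t + s, c r) * hode (t + s)

theorem integral_exp_integral_mul_eq_sub (hc : Continuous c) (hg : Continuous g)
    (hu : Differentiable ℝ u) (hode : ∀ t, deriv u t + k * c t * u t = g t) (t T : ℝ) :
    ∫ s in (0 : ℝ)..T, Complex.exp (k * ∫ r in t..t + s, c r) * g (t + s) =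
      Complex.exp (k * ∫ r in t..t + T, c r) * u (t + T) - u t := by
  have hcont : Continuous fun s ↦ Complex.exp (k * ∫ r in t..t + s, c r) * g (t + s) :=
    ((continuous_const.mul
      (continuous_iff_continuousAt.2 fun s ↦ (hasDerivAt_integral_add hc t s).continuousAt)).cexp).mul
      (hg.comp (continuous_const_add t))
  rw [intervalIntegral.integral_eq_sub_of_hasDerivAt
    (fun s _ ↦ hasDerivAt_exp_integral_mul_of_deriv_add_mul_eq k hc hu hode t s)
    (hcont.intervalIntegrable _ _)]
  simp only [add_zero, intervalIntegral.integral_same, mul_zero, Complex.exp_zero, one_mul]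

theorem Function.Periodic.sub_one_mul_eq_integral_exp_integral_mul {T : ℝ}
    (hcper : Function.Periodic c T) (huper : Function.Periodic u T) (hc : Continuous c)
    (hg : Continuous g) (hu : Differentiable ℝ u) (hode : ∀ t, deriv u t + k * c t * u t = g t)
    (t : ℝ) :
    (Complex.exp (k * ∫ r in (0 : ℝ)..T, c r) - 1) * u t =
      ∫ s in (0 : ℝ)..T, Complex.exp (k * ∫ r in t..t + s, c r) * g (t + s) := by
  rw [integral_exp_integral_mul_eq_sub k hc hg hu hode, hcper.intervalIntegral_add_eq t 0,
    zero_add, huper t]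
  ring

end IntegratingFactor

theorem Complex.exp_two_pi_mul_I_mul_ne_one {z : ℂ} (hz : ∀ m : ℤ, z ≠ m) :
    Complex.exp (2 * π * Complex.I * z) ≠ 1 := by
  rw [Ne, Complex.exp_eq_one_iff]
  rintro ⟨m, hm⟩
  refine hz m (mul_left_cancel₀ (by simp [pi_ne_zero] : 2 * π * Complex.I ≠ 0) ?_)
  linear_combination hm

theorem stmt6_general (c f : ℝ → ℂ) (hc : Continuous c) (hf : Continuous f)
    (hcper : Function.Periodic c (2 * Real.pi))
    (lam : ℝ) (c₀ : ℂ)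
    (hc₀ : c₀ = ((2 * Real.pi : ℝ) : ℂ)⁻¹ * ∫ t in (0:ℝ)..(2 * Real.pi), c t)
    (hnres : ∀ m : ℤ, (lam : ℂ) * c₀ ≠ (m : ℂ))
    (u : ℝ → ℂ) (hu : Differentiable ℝ u) (huper : Function.Periodic u (2 * Real.pi))
    (hode : ∀ t : ℝ, deriv u t + Complex.I * (lam : ℂ) * c t * u t = Complex.I * f t) :
    ∀ t : ℝ, u t =
      Complex.I * (Complex.exp (2 * Real.pi * Complex.I * (lam : ℂ) * c₀) - 1)⁻¹ *
        ∫ s in (0:ℝ)..(2 * Real.pi),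
          Complex.exp (Complex.I * (lam : ℂ) * ∫ r in t..(t + s), c r) * f (t + s) := by
  intro t
  have hmean : ∫ r in (0 : ℝ)..2 * π, c r = 2 * π * c₀ := by
    have h2π : ((2 * π : ℝ) : ℂ) ≠ 0 := by exact_mod_cast two_pi_pos.ne'
    rw [hc₀, ← mul_assoc, ← Complex.ofReal_ofNat, ← Complex.ofReal_mul, mul_inv_cancel₀ h2π,
      one_mul]
  have hne : Complex.exp (2 * π * Complex.I * lam * c₀) - 1 ≠ 0 := by
    rw [mul_assoc]
    exact sub_ne_zero.2 (Complex.exp_two_pi_mul_I_mul_ne_one hnres)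
  have key := hcper.sub_one_mul_eq_integral_exp_integral_mul (g := fun s ↦ Complex.I * f s)
    (Complex.I * lam) huper hc (continuous_const.mul hf) hu hode t
  simp only [mul_left_comm _ Complex.I, intervalIntegral.integral_const_mul] at key
  rw [hmean, show Complex.I * lam * (2 * π * c₀) = 2 * π * Complex.I * lam * c₀ by ring] at key
  rw [mul_right_comm, ← key, mul_comm _ (u t), mul_inv_cancel_right₀ hne]

/-- Formula (2.9): in the nonresonant case `λ c₀ ∉ ℤ`, the (unique) `2π`-periodic
differentiable solution of `u' + i λ c u = i f` satisfies also the second explicit formula. -/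
theorem stmt6 (c f : ℝ → ℂ) (hc : Continuous c) (hf : Continuous f)
    (hcper : Function.Periodic c (2 * Real.pi)) (hfper : Function.Periodic f (2 * Real.pi))
    (lam : ℝ) (c₀ : ℂ)
    (hc₀ : c₀ = ((2 * Real.pi : ℝ) : ℂ)⁻¹ * ∫ t in (0:ℝ)..(2 * Real.pi), c t)
    (hnres : ∀ m : ℤ, (lam : ℂ) * c₀ ≠ (m : ℂ))
    (u : ℝ → ℂ) (hu : Differentiable ℝ u) (huper : Function.Periodic u (2 * Real.pi))
    (hode : ∀ t : ℝ, deriv u t + Complex.I * (lam : ℂ) * c t * u t = Complex.I * f t) :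
    ∀ t : ℝ, u t =
      Complex.I * (Complex.exp (2 * Real.pi * Complex.I * (lam : ℂ) * c₀) - 1)⁻¹ *
        ∫ s in (0:ℝ)..(2 * Real.pi),
          Complex.exp (Complex.I * (lam : ℂ) * ∫ r in t..(t + s), c r) * f (t + s) :=
  stmt6_general c f hc hf hcper lam c₀ hc₀ hnres u hu huper hode
end

section
/- Let b : ℝ → ℝ be continuous and 2π-periodic with ∫₀^{2π} b(s) ds = 0, and let B : 𝕋 → ℝ be the continuous function on 𝕋 = ℝ/2πℤ induced by t ↦ ∫₀ᵗ b(s) ds. Assume that the superlevel set {t ∈ 𝕋 : B(t) > r} is preconnected for every r ∈ ℝ, and let t₁ ∈ 𝕋 be a point where B attains its maximum. Then for every t ∈ 𝕋 there exists a continuous path γ : [0,1] → 𝕋 with γ(0) = t, γ(1) = t₁, and B(γ(s)) ≥ B(t) for all s ∈ [0,1]. -/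
open Real

/-- Key geometric fact in Theorem 4.1(c): if all superlevel sets of the induced primitive
`B` of `b` on the circle are preconnected and `t₁` maximizes `B`, then every `t` can be
joined to `t₁` by a path along which `B` never drops below `B(t)`. -/
theorem stmt14 (b : ℝ → ℝ) (hb : Continuous b)
    (hbper : Function.Periodic b (2 * Real.pi))
    (hb0 : (∫ s in (0:ℝ)..(2 * Real.pi), b s) = 0)
    (B : AddCircle (2 * Real.pi) → ℝ) (hB : Continuous B)
    (hBb : ∀ t : ℝ, B (t : AddCircle (2 * Real.pi)) = ∫ s in (0:ℝ)..t, b s)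
    (hconn : ∀ r : ℝ, IsPreconnected {t : AddCircle (2 * Real.pi) | r < B t})
    (t₁ : AddCircle (2 * Real.pi)) (ht₁ : ∀ t : AddCircle (2 * Real.pi), B t ≤ B t₁) :
    ∀ t : AddCircle (2 * Real.pi), ∃ γ : ℝ → AddCircle (2 * Real.pi),
      ContinuousOn γ (Set.Icc (0:ℝ) 1) ∧ γ 0 = t ∧ γ 1 = t₁ ∧
      ∀ s ∈ Set.Icc (0:ℝ) 1, B t ≤ B (γ s) := by
  have hp : (0:ℝ) < 2 * Real.pi := by positivity
  -- periodicity of the coercion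
  have hper : ∀ x : ℝ, ((x + 2 * Real.pi : ℝ) : AddCircle (2 * Real.pi)) = (x : AddCircle (2 * Real.pi)) :=
    fun x => AddCircle.coe_add_period (2 * Real.pi) x
  intro t
  obtain ⟨a, rfl⟩ := QuotientAddGroup.mk_surjective t
  obtain ⟨y, hy⟩ := QuotientAddGroup.mk_surjective t₁
  set c := toIcoMod hp a y with hcdef
  have hcmem : c ∈ Set.Ico a (a + 2 * Real.pi) := toIcoMod_mem_Ico hp a y
  have hc : (c : AddCircle (2 * Real.pi)) = t₁ := by
    rw [← hy]
    refine QuotientAddGroup.eq.mpr ?_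
    refine AddSubgroup.mem_zmultiples_iff.mpr ⟨toIcoDiv hp a y, ?_⟩
    rw [← self_sub_toIcoMod hp a y, hcdef]; ring
  -- key dichotomy
  have key : (∀ x ∈ Set.Icc a c, B ↑a ≤ B ↑x) ∨
      (∀ x ∈ Set.Icc c (a + 2 * Real.pi), B ↑a ≤ B ↑x) := by
    by_contra h
    push_neg at h
    obtain ⟨⟨u, hu, hu2⟩, ⟨v, hv, hv2⟩⟩ := h
    have hua : a < u := by
      rcases hu.1.lt_or_eq with h' | h'
      · exact h'
      · exact absurd hu2 (by rw [← h']; exact lt_irrefl _)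
    have huc : u < c := by
      rcases hu.2.lt_or_eq with h' | h'
      · exact h'
      · exfalso; rw [h'] at hu2; rw [hc] at hu2; exact absurd (ht₁ _) (not_le.mpr hu2)
    have hvc : c < v := by
      rcases hv.1.lt_or_eq with h' | h'
      · exact h'
      · exfalso; rw [← h'] at hv2; rw [hc] at hv2; exact absurd (ht₁ _) (not_le.mpr hv2)
    have hva : v < a + 2 * Real.pi := by
      rcases hv.2.lt_or_eq with h' | h'
      · exact h'
      · exfalso; rw [h', hper a] at hv2; exact lt_irrefl _ hv2
    set r := max (B ↑u) (B ↑v) with hrdef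
    have hr : r < B ↑a := max_lt hu2 hv2
    set S := {x : AddCircle (2 * Real.pi) | r < B x} with hSdef
    set U := ((↑) : ℝ → AddCircle (2 * Real.pi)) '' Set.Ioo u v with hUdef
    set V := ((↑) : ℝ → AddCircle (2 * Real.pi)) '' Set.Ioo v (u + 2 * Real.pi) with hVdef
    have hUopen : IsOpen U := QuotientAddGroup.isOpenMap_coe _ isOpen_Ioo
    have hVopen : IsOpen V := QuotientAddGroup.isOpenMap_coe _ isOpen_Ioo
    -- disjointness helper
    have hdisj : ∀ x ∈ Set.Ioo u v, ∀ z ∈ Set.Ioo v (u + 2 * Real.pi),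
        (x : AddCircle (2 * Real.pi)) ≠ (z : AddCircle (2 * Real.pi)) := by
      intro x hx z hz hxz
      obtain ⟨k, hk⟩ := AddSubgroup.mem_zmultiples_iff.mp (QuotientAddGroup.eq.mp hxz)
      have h1 : (0:ℝ) < -x + z := by linarith [hx.2, hz.1]
      have h2 : -x + z < 2 * Real.pi := by linarith [hx.1, hz.2]
      rw [← hk] at h1 h2
      rcases le_or_gt k 0 with hk0 | hk0
      · have : (k : ℝ) * (2 * Real.pi) ≤ 0 :=
          mul_nonpos_of_nonpos_of_nonneg (by exact_mod_cast hk0) (le_of_lt hp)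
        rw [zsmul_eq_mul] at h1; linarith
      · have hk1 : (1:ℝ) ≤ (k:ℝ) := by exact_mod_cast hk0
        have : 2 * Real.pi ≤ (k : ℝ) * (2 * Real.pi) := le_mul_of_one_le_left (le_of_lt hp) hk1
        rw [zsmul_eq_mul] at h2; linarith
    -- coverage
    have hcover : S ⊆ U ∪ V := by
      intro s hs
      obtain ⟨z0, rfl⟩ := QuotientAddGroup.mk_surjective s
      set z := toIcoMod hp u z0 with hzdef
      have hzmem : z ∈ Set.Ico u (u + 2 * Real.pi) := toIcoMod_mem_Ico hp u z0
      have hz : (z : AddCircle (2 * Real.pi)) = (z0 : AddCircle (2 * Real.pi)) := by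
        refine QuotientAddGroup.eq.mpr ?_
        refine AddSubgroup.mem_zmultiples_iff.mpr ⟨toIcoDiv hp u z0, ?_⟩
        rw [← self_sub_toIcoMod hp u z0, hzdef]; ring
      have hzu : z ≠ u := by
        intro h'
        have : r < B ↑z := by rw [hz]; exact hs
        rw [h'] at this; exact absurd (le_max_left _ _) (not_le.mpr this)
      have hzv : z ≠ v := by
        intro h'
        have : r < B ↑z := by rw [hz]; exact hs
        rw [h'] at this; exact absurd (le_max_right _ _) (not_le.mpr this)
      rcases lt_trichotomy z v with h' | h' | h'
      · exact Or.inl ⟨z, ⟨lt_of_le_of_ne hzmem.1 (Ne.symm hzu), h'⟩, hz⟩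
      · exact absurd h' hzv
      · exact Or.inr ⟨z, ⟨h', hzmem.2⟩, hz⟩
    have hSU : (S ∩ U).Nonempty := by
      refine ⟨(c : AddCircle (2 * Real.pi)), ?_, ⟨c, ⟨huc, hvc⟩, rfl⟩⟩
      show r < B ↑c
      rw [hc]; exact lt_of_lt_of_le hr (ht₁ _)
    have hSV : (S ∩ V).Nonempty := by
      refine ⟨(a : AddCircle (2 * Real.pi)), hr, ⟨a + 2 * Real.pi, ⟨hva, by linarith⟩, hper a⟩⟩
    obtain ⟨w, hwS, hwU, hwV⟩ := hconn r U V hUopen hVopen hcover hSU hSV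
    obtain ⟨x, hx, hxw⟩ := hwU
    obtain ⟨z, hzm, hzw⟩ := hwV
    exact hdisj x hx z hzm (hxw.trans hzw.symm)
  rcases key with h1 | h1
  · refine ⟨fun s => ((a + s * (c - a) : ℝ) : AddCircle (2 * Real.pi)), ?_, ?_, ?_, ?_⟩
    · exact (continuous_quotient_mk'.comp (by continuity)).continuousOn
    · simp
    · simp only [one_mul]; rw [show a + (c - a) = c by ring, hc]
    · intro s hs
      refine h1 _ ⟨?_, ?_⟩
      · nlinarith [hs.1, hs.2, hcmem.1]
      · nlinarith [hs.1, hs.2, hcmem.1]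
  · refine ⟨fun s => ((a + s * (c - a - 2 * Real.pi) : ℝ) : AddCircle (2 * Real.pi)), ?_, ?_, ?_, ?_⟩
    · exact (continuous_quotient_mk'.comp (by continuity)).continuousOn
    · simp
    · simp only [one_mul]
      rw [show a + (c - a - 2 * Real.pi) = (c - 2 * Real.pi : ℝ) by ring]
      rw [← hc]
      have := hper (c - 2 * Real.pi)
      rw [show c - 2 * Real.pi + 2 * Real.pi = c by ring] at this
      exact this.symm
    · intro s hs
      show B ↑a ≤ B ↑(a + s * (c - a - 2 * Real.pi))
      rw [← hper (a + s * (c - a - 2 * Real.pi))]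
      refine h1 _ ⟨?_, ?_⟩
      · nlinarith [hs.1, hs.2, hcmem.2]
      · nlinarith [hs.1, hs.2, hcmem.2]
end

section
/- Let σ > 1, μ ≥ 1/2, let m, n ≥ 1 be integers, let α ∈ ℝ, and let C, C′, ε₀ > 0. Let (λ_j)_{j∈ℕ} be real numbers with |λ_j| ≤ C′ j^{m/(2n)} for all j ≥ 1, and let (f_j)_{j∈ℕ} be smooth 2π-periodic functions ℝ → ℂ such that sup_{t∈ℝ} |∂_t^k f_j(t)| ≤ C^{k+1} (k!)^σ exp(−ε₀ j^{1/(2nμ)}) for all j, k ∈ ℕ. Define u_j(t) = exp(−i λ_j α t) ∫₀ᵗ exp(i λ_j α s) f_j(s) ds. Then there exists a constant C₁ > 0 such that sup_{t∈[0,2π]} |∂_t^γ u_j(t)| ≤ C₁^{γ+1} (γ!)^{max{σ, mμ}} exp(−(ε₀/2) j^{1/(2nμ)}) for all j, γ ∈ ℕ. -/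
set_option maxHeartbeats 1000000

open Real
open scoped ContDiff

lemma stmt15_pow_rpow_comm (b : ℝ) (hb : 0 ≤ b) (e : ℝ) (p : ℕ) :
    (b ^ p) ^ e = (b ^ e) ^ p := by
  rw [← Real.rpow_natCast b p, ← Real.rpow_mul hb, mul_comm, Real.rpow_mul hb,
    Real.rpow_natCast]



lemma stmt15_pow_self_le (p : ℕ) : (p:ℝ)^p ≤ Real.exp p * (p.factorial : ℝ) := by
  have h0 : (0:ℝ) < (p.factorial : ℝ) := by positivity
  have h1 : (p:ℝ)^p / (p.factorial : ℝ) ≤ Real.exp p := by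
    refine le_trans ?_ (Real.sum_le_exp_of_nonneg (x := (p:ℝ)) (by positivity) (p+1))
    exact Finset.single_le_sum (f := fun i => (p:ℝ)^i / (i.factorial : ℝ))
      (fun i _ => by positivity) (Finset.self_mem_range_succ p)
  calc (p:ℝ)^p = (p:ℝ)^p / (p.factorial:ℝ) * (p.factorial:ℝ) := by field_simp
  _ ≤ Real.exp p * (p.factorial:ℝ) := mul_le_mul_of_nonneg_right h1 h0.le

lemma stmt15_rpow_le_exp {c : ℝ} (hc : 0 < c) {x a : ℝ} (hx : 0 ≤ x) (ha : 0 ≤ a) :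
    x ^ a ≤ (a / c) ^ a * Real.exp (c * x) := by
  rcases eq_or_lt_of_le ha with h0 | ha
  · rw [← h0]
    simp only [Real.rpow_zero, one_mul]
    exact Real.one_le_exp (by positivity)
  · rcases eq_or_lt_of_le hx with hx0 | hx
    · rw [← hx0, Real.zero_rpow (ne_of_gt ha)]; positivity
    · have hy : 0 < c * x / a := by positivity
      have key : (c*x/a) ^ a ≤ Real.exp (c*x) := by
        rw [Real.rpow_def_of_pos hy]
        apply Real.exp_le_exp.mpr
        have hlog : Real.log (c*x/a) ≤ c*x/a :=
          (Real.log_le_sub_one_of_pos hy).trans (by linarith)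
        calc Real.log (c*x/a) * a ≤ (c*x/a) * a := mul_le_mul_of_nonneg_right hlog ha.le
          _ = c*x := by field_simp
      have hxy : x = (a / c) * (c * x / a) := by field_simp
      calc x ^ a = ((a/c) * (c*x/a)) ^ a := by rw [← hxy]
        _ = (a/c)^a * (c*x/a)^a := Real.mul_rpow (by positivity) hy.le
        _ ≤ (a/c)^a * Real.exp (c*x) :=
            mul_le_mul_of_nonneg_left key (Real.rpow_nonneg (by positivity) a)

lemma stmt15_itd_lin {c : ℂ} {v w : ℝ → ℂ} (hv : ContDiff ℝ ∞ v) (hw : ContDiff ℝ ∞ w)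
    (γ : ℕ) (t : ℝ) :
    iteratedDeriv γ (fun s => c * v s + w s) t
      = c * iteratedDeriv γ v t + iteratedDeriv γ w t := by
  have hv' : ContDiff ℝ γ v := hv.of_le (by exact_mod_cast le_top)
  have hw' : ContDiff ℝ γ w := hw.of_le (by exact_mod_cast le_top)
  have hcv : ContDiff ℝ γ (c • v) := hv'.const_smul c
  have heq : (fun s => c * v s + w s) = (c • v) + w := by
    funext s; simp [smul_eq_mul]
  simp only [iteratedDeriv_eq_iteratedFDeriv, heq]
  rw [iteratedFDeriv_add_apply hcv.contDiffAt hw'.contDiffAt, ContinuousMultilinearMap.add_apply]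
  congr 1
  rw [iteratedFDeriv_const_smul_apply hv'.contDiffAt, ContinuousMultilinearMap.smul_apply, smul_eq_mul]

lemma stmt15_ode (c : ℂ) (f : ℝ → ℂ) (hf : ContDiff ℝ ∞ f) :
    ContDiff ℝ ∞ (fun t : ℝ =>
        Complex.exp (-(c * t)) * ∫ s in (0:ℝ)..t, Complex.exp (c * s) * f s)
    ∧ ∀ t : ℝ, HasDerivAt
        (fun t : ℝ => Complex.exp (-(c * t)) * ∫ s in (0:ℝ)..t, Complex.exp (c * s) * f s)
        (-c * (Complex.exp (-(c * t)) * ∫ s in (0:ℝ)..t, Complex.exp (c * s) * f s) + f t) t := by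
  have hlincd : ContDiff ℝ ∞ (fun t : ℝ => c * (t:ℂ)) :=
    contDiff_const.mul Complex.ofRealCLM.contDiff
  have hcont : Continuous (fun s : ℝ => Complex.exp (c * s) * f s) :=
    (Complex.continuous_exp.comp hlincd.continuous).mul hf.continuous
  set g : ℝ → ℂ := fun t => ∫ s in (0:ℝ)..t, Complex.exp (c * s) * f s with hgdef
  have hgd : ∀ t : ℝ, HasDerivAt g (Complex.exp (c * t) * f t) t :=
    fun t => (hcont.integral_hasStrictDerivAt 0 t).hasDerivAt
  have hlin : ∀ t : ℝ, HasDerivAt (fun t : ℝ => c * (t:ℂ)) c t := by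
    intro t
    simpa using ((hasDerivAt_id t).ofReal_comp).const_mul c
  have hEd : ∀ t : ℝ, HasDerivAt (fun t : ℝ => Complex.exp (-(c * t)))
      (-c * Complex.exp (-(c * t))) t := by
    intro t
    simpa [mul_comm] using ((hlin t).neg).cexp
  have hgc : ContDiff ℝ ∞ g := by
    rw [contDiff_infty_iff_deriv]
    refine ⟨fun t => (hgd t).differentiableAt, ?_⟩
    have hdg : deriv g = fun t : ℝ => Complex.exp (c * t) * f t := funext fun t => (hgd t).deriv
    rw [hdg]
    exact (Complex.contDiff_exp.comp hlincd).mul hf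
  have hEc : ContDiff ℝ ∞ (fun t : ℝ => Complex.exp (-(c * t))) :=
    Complex.contDiff_exp.comp hlincd.neg
  refine ⟨hEc.mul hgc, fun t => ?_⟩
  have hd := (hEd t).mul (hgd t)
  have hexp : Complex.exp (-(c * t)) * Complex.exp (c * t) = 1 := by
    rw [← Complex.exp_add]; simp
  refine hd.congr_deriv ?_
  have : Complex.exp (-(c * ↑t)) * (Complex.exp (c * ↑t) * f t) = f t := by
    rw [← mul_assoc, hexp, one_mul]
  rw [this]
  ring

/-- Uniform derivative estimate for the resonant modes in the sufficiency proof of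
Theorem 3.4: if the data `f_j` satisfy Gevrey-in-`t`, exponentially-decaying-in-`j`
bounds, then so do the coefficients `u_j(t) = e^{-iλ_jαt} ∫₀ᵗ e^{iλ_jαs} f_j(s) ds`,
with Gevrey order `max{σ, mμ}` and decay rate `ε₀/2`. -/
theorem stmt15 (σ μ : ℝ) (hσ : 1 < σ) (hμ : 1 / 2 ≤ μ)
    (m n : ℕ) (hm : 1 ≤ m) (hn : 1 ≤ n) (α : ℝ)
    (C C' ε₀ : ℝ) (hC : 0 < C) (hC' : 0 < C') (hε₀ : 0 < ε₀)
    (l : ℕ → ℝ)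
    (hl : ∀ j : ℕ, 1 ≤ j → |l j| ≤ C' * (j : ℝ) ^ ((m : ℝ) / (2 * (n : ℝ))))
    (f : ℕ → ℝ → ℂ)
    (hfsmooth : ∀ j : ℕ, ContDiff ℝ (⊤ : ℕ∞) (f j))
    (hfper : ∀ j : ℕ, Function.Periodic (f j) (2 * Real.pi))
    (hfest : ∀ j k : ℕ, ∀ t : ℝ,
      ‖iteratedDeriv k (f j) t‖ ≤
        C ^ (k + 1) * ((Nat.factorial k : ℝ)) ^ σ *
          Real.exp (-ε₀ * (j : ℝ) ^ (1 / (2 * (n : ℝ) * μ))))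
    (u : ℕ → ℝ → ℂ)
    (hu : ∀ j : ℕ, ∀ t : ℝ, u j t =
      Complex.exp (-(Complex.I * (l j : ℂ) * (α : ℂ) * (t : ℂ))) *
        ∫ s in (0:ℝ)..t, Complex.exp (Complex.I * (l j : ℂ) * (α : ℂ) * (s : ℂ)) * f j s) :
    ∃ C₁ > (0 : ℝ), ∀ j γ : ℕ, ∀ t ∈ Set.Icc (0:ℝ) (2 * Real.pi),
      ‖iteratedDeriv γ (u j) t‖ ≤
        C₁ ^ (γ + 1) * ((Nat.factorial γ : ℝ)) ^ (max σ ((m : ℝ) * μ)) *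
          Real.exp (-(ε₀ / 2) * (j : ℝ) ^ (1 / (2 * (n : ℝ) * μ))) := by
  have hμ0 : (0:ℝ) < μ := lt_of_lt_of_le (by norm_num) hμ
  have hn0 : (0:ℝ) < (n:ℝ) := by exact_mod_cast hn
  have hm0 : (0:ℝ) < (m:ℝ) := by exact_mod_cast hm
  have hπ : (0:ℝ) < Real.pi := Real.pi_pos
  set r : ℝ := 1 / (2 * (n:ℝ) * μ) with hrdef
  have hr0 : 0 < r := by positivity
  set τ : ℝ := max σ ((m:ℝ)*μ) with hτdef
  have hτσ : σ ≤ τ := le_max_left _ _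
  have hτm : (m:ℝ)*μ ≤ τ := le_max_right _ _
  have hτ0 : 0 ≤ τ := le_trans (by linarith) hτσ
  have hmμ0 : 0 ≤ (m:ℝ)*μ := by positivity
  set A : ℕ → ℝ := fun j => |l j| * |α| with hAdef
  have hA0 : ∀ j, 0 ≤ A j := fun j => by rw [hAdef]; positivity
  have hfact1 : ∀ p : ℕ, (1:ℝ) ≤ (p.factorial : ℝ) := fun p => by
    exact_mod_cast p.factorial_pos
  have hfactr : ∀ p : ℕ, ∀ e : ℝ, 0 ≤ e → (1:ℝ) ≤ (p.factorial:ℝ) ^ e := by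
    intro p e he
    calc (1:ℝ) = 1 ^ e := (Real.one_rpow e).symm
    _ ≤ (p.factorial:ℝ) ^ e := Real.rpow_le_rpow zero_le_one (hfact1 p) he
  -- The K-claim
  obtain ⟨K, hK1, hKclaim⟩ : ∃ K : ℝ, 1 ≤ K ∧ ∀ j p : ℕ,
      A j ^ p * Real.exp (-ε₀ * (j:ℝ)^r)
      ≤ K ^ p * (p.factorial:ℝ) ^ ((m:ℝ)*μ) * Real.exp (-(ε₀/2) * (j:ℝ)^r) := by
    set q : ℝ := 2 * ((m:ℝ)*μ) / ε₀ with hqdef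
    have hq0 : 0 < q := by rw [hqdef]; positivity
    set K₁ : ℝ := C' * |α| * ((q * Real.exp 1) ^ ((m:ℝ)*μ)) with hK₁def
    have hK₁0 : 0 ≤ K₁ := by rw [hK₁def]; positivity
    set K : ℝ := max 1 (max (A 0) K₁) with hKdef
    have hK1 : 1 ≤ K := le_max_left _ _
    have hK0 : (0:ℝ) < K := lt_of_lt_of_le one_pos hK1
    refine ⟨K, hK1, ?_⟩
    intro j p
    have hx : (0:ℝ) ≤ (j:ℝ) ^ r := Real.rpow_nonneg (Nat.cast_nonneg j) r
    have hE12 : Real.exp (-ε₀ * (j:ℝ)^r) ≤ Real.exp (-(ε₀/2) * (j:ℝ)^r) := by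
      apply Real.exp_le_exp.mpr; nlinarith
    rcases Nat.eq_zero_or_pos p with hp | hp
    · subst hp
      simpa using hE12
    rcases Nat.eq_zero_or_pos j with hj | hj
    · subst hj
      have hx0 : ((0:ℕ):ℝ) ^ r = 0 := by
        rw [Nat.cast_zero]; exact Real.zero_rpow (ne_of_gt hr0)
      rw [hx0, mul_zero, mul_zero, Real.exp_zero, mul_one, mul_one]
      have h1 : A 0 ^ p ≤ K ^ p :=
        pow_le_pow_left₀ (hA0 0) ((le_max_left _ _).trans (le_max_right _ _)) p
      calc A 0 ^ p ≤ K ^ p := h1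
      _ = K ^ p * 1 := (mul_one _).symm
      _ ≤ K ^ p * (p.factorial:ℝ) ^ ((m:ℝ)*μ) :=
          mul_le_mul_of_nonneg_left (hfactr p _ hmμ0) (by positivity)
    -- j ≥ 1, p ≥ 1
    have hAle : A j ≤ C' * |α| * ((j:ℝ)^r) ^ ((m:ℝ)*μ) := by
      have h1 : |l j| ≤ C' * (j:ℝ) ^ ((m:ℝ)/(2*(n:ℝ))) := hl j hj
      have h2 : ((j:ℝ)^r) ^ ((m:ℝ)*μ) = (j:ℝ) ^ ((m:ℝ)/(2*(n:ℝ))) := by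
        rw [← Real.rpow_mul (Nat.cast_nonneg j)]
        congr 1
        rw [hrdef]; field_simp
      rw [h2, hAdef]
      calc |l j| * |α| ≤ (C' * (j:ℝ) ^ ((m:ℝ)/(2*(n:ℝ)))) * |α| :=
            mul_le_mul_of_nonneg_right h1 (abs_nonneg α)
      _ = C' * |α| * (j:ℝ) ^ ((m:ℝ)/(2*(n:ℝ))) := by ring
    have hstep2 : A j ^ p ≤ (C' * |α|) ^ p * ((j:ℝ)^r) ^ ((m:ℝ)*μ * p) := by
      calc A j ^ p ≤ (C' * |α| * ((j:ℝ)^r) ^ ((m:ℝ)*μ)) ^ p := pow_le_pow_left₀ (hA0 j) hAle p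
      _ = (C' * |α|) ^ p * (((j:ℝ)^r) ^ ((m:ℝ)*μ)) ^ p := mul_pow _ _ p
      _ = (C' * |α|) ^ p * ((j:ℝ)^r) ^ ((m:ℝ)*μ * p) := by
          rw [Real.rpow_mul hx ((m:ℝ)*μ) (p:ℝ), Real.rpow_natCast]
    have hstep3 : ((j:ℝ)^r) ^ ((m:ℝ)*μ*p) * Real.exp (-ε₀ * ((j:ℝ)^r))
        ≤ (((m:ℝ)*μ*p) / (ε₀/2)) ^ ((m:ℝ)*μ*p) * Real.exp (-(ε₀/2) * ((j:ℝ)^r)) := by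
      have h := stmt15_rpow_le_exp (c := ε₀/2) (by positivity) hx
        (by positivity : (0:ℝ) ≤ (m:ℝ)*μ*p)
      have harg : (ε₀/2) * ((j:ℝ)^r) + (-ε₀ * ((j:ℝ)^r)) = -(ε₀/2) * ((j:ℝ)^r) := by ring
      calc ((j:ℝ)^r) ^ ((m:ℝ)*μ*p) * Real.exp (-ε₀ * ((j:ℝ)^r))
          ≤ ((((m:ℝ)*μ*p) / (ε₀/2)) ^ ((m:ℝ)*μ*p) * Real.exp ((ε₀/2) * ((j:ℝ)^r)))
            * Real.exp (-ε₀ * ((j:ℝ)^r)) :=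
            mul_le_mul_of_nonneg_right h (Real.exp_pos _).le
      _ = (((m:ℝ)*μ*p) / (ε₀/2)) ^ ((m:ℝ)*μ*p) * Real.exp (-(ε₀/2) * ((j:ℝ)^r)) := by
            rw [mul_assoc, ← Real.exp_add, harg]
    have hstep4 : (((m:ℝ)*μ*p) / (ε₀/2)) ^ ((m:ℝ)*μ*p)
        ≤ ((q * Real.exp 1) ^ ((m:ℝ)*μ)) ^ p * (p.factorial:ℝ) ^ ((m:ℝ)*μ) := by
      have hbase : ((m:ℝ)*μ*p) / (ε₀/2) = q * p := by rw [hqdef]; field_simp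
      rw [hbase]
      have hqp : (0:ℝ) ≤ q * p := by positivity
      have h2 : (q*(p:ℝ)) ^ (p:ℕ) ≤ (q * Real.exp 1) ^ (p:ℕ) * (p.factorial:ℝ) := by
        calc (q*(p:ℝ))^(p:ℕ) = q^(p:ℕ) * (p:ℝ)^(p:ℕ) := mul_pow q _ p
        _ ≤ q^(p:ℕ) * (Real.exp p * (p.factorial:ℝ)) :=
            mul_le_mul_of_nonneg_left (stmt15_pow_self_le p) (by positivity)
        _ = (q * Real.exp 1)^(p:ℕ) * (p.factorial:ℝ) := by
            rw [mul_pow, Real.exp_one_pow]; ring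
      calc (q*(p:ℝ)) ^ ((m:ℝ)*μ*(p:ℕ))
          = ((q*(p:ℝ)) ^ (p:ℕ)) ^ ((m:ℝ)*μ) := by
            rw [stmt15_pow_rpow_comm _ hqp, ← Real.rpow_natCast ((q*(p:ℝ))^((m:ℝ)*μ)) p,
              ← Real.rpow_mul hqp]
      _ ≤ ((q * Real.exp 1) ^ (p:ℕ) * (p.factorial:ℝ)) ^ ((m:ℝ)*μ) :=
            Real.rpow_le_rpow (by positivity) h2 hmμ0
      _ = (((q * Real.exp 1) ^ (p:ℕ)) ^ ((m:ℝ)*μ)) * (p.factorial:ℝ) ^ ((m:ℝ)*μ) :=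
            Real.mul_rpow (by positivity) (by positivity)
      _ = ((q * Real.exp 1) ^ ((m:ℝ)*μ)) ^ (p:ℕ) * (p.factorial:ℝ) ^ ((m:ℝ)*μ) := by
            rw [stmt15_pow_rpow_comm _ (by positivity)]
    calc A j ^ p * Real.exp (-ε₀ * (j:ℝ)^r)
        ≤ ((C' * |α|) ^ p * ((j:ℝ)^r) ^ ((m:ℝ)*μ*p)) * Real.exp (-ε₀ * (j:ℝ)^r) :=
          mul_le_mul_of_nonneg_right hstep2 (Real.exp_pos _).le
    _ = (C' * |α|) ^ p * (((j:ℝ)^r) ^ ((m:ℝ)*μ*p) * Real.exp (-ε₀ * (j:ℝ)^r)) := by ring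
    _ ≤ (C' * |α|) ^ p * ((((m:ℝ)*μ*p)/(ε₀/2)) ^ ((m:ℝ)*μ*p)
          * Real.exp (-(ε₀/2) * (j:ℝ)^r)) :=
          mul_le_mul_of_nonneg_left hstep3 (by positivity)
    _ ≤ (C' * |α|) ^ p * ((((q*Real.exp 1)^((m:ℝ)*μ))^p * (p.factorial:ℝ)^((m:ℝ)*μ))
          * Real.exp (-(ε₀/2) * (j:ℝ)^r)) :=
          mul_le_mul_of_nonneg_left
            (mul_le_mul_of_nonneg_right hstep4 (Real.exp_pos _).le) (by positivity)
    _ = K₁ ^ p * (p.factorial:ℝ)^((m:ℝ)*μ) * Real.exp (-(ε₀/2) * (j:ℝ)^r) := by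
          rw [hK₁def, mul_pow]; ring
    _ ≤ K ^ p * (p.factorial:ℝ)^((m:ℝ)*μ) * Real.exp (-(ε₀/2) * (j:ℝ)^r) := by
          have hKK : K₁ ≤ K := (le_max_right (A 0) K₁).trans (le_max_right 1 _)
          exact mul_le_mul_of_nonneg_right
            (mul_le_mul_of_nonneg_right (pow_le_pow_left₀ hK₁0 hKK p) (by positivity))
            (Real.exp_pos _).le
  have hK0 : (0:ℝ) < K := lt_of_lt_of_le one_pos hK1
  -- per-mode bound by induction on the order of the derivative
  have main : ∀ j : ℕ, ∀ γ : ℕ, ∀ t ∈ Set.Icc (0:ℝ) (2*Real.pi),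
      ‖iteratedDeriv γ (u j) t‖ ≤
        2*Real.pi * (C * Real.exp (-ε₀ * (j:ℝ)^r)) * (A j)^γ
        + ∑ k ∈ Finset.range γ, (A j)^(γ-1-k)
            * (C^(k+1) * ((Nat.factorial k:ℝ))^σ * Real.exp (-ε₀ * (j:ℝ)^r)) := by
    intro j
    set c : ℂ := Complex.I * (l j : ℂ) * (α : ℂ) with hcdef
    have hfj : ContDiff ℝ ∞ (f j) := (hfsmooth j).of_le (by simp)
    have hode := stmt15_ode c (f j) hfj
    have huj : u j = fun t : ℝ =>
        Complex.exp (-(c * t)) * ∫ s in (0:ℝ)..t, Complex.exp (c * s) * f j s := by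
      funext t
      rw [hu j t, hcdef]
    have husm : ContDiff ℝ ∞ (u j) := by rw [huj]; exact hode.1
    have hODE : ∀ t : ℝ, HasDerivAt (u j) (-c * u j t + f j t) t := by
      intro t
      have h := hode.2 t
      rw [← huj] at h
      convert h using 2
      rw [huj]
    have hrec : ∀ γ : ℕ, ∀ t : ℝ, iteratedDeriv (γ+1) (u j) t
        = -c * iteratedDeriv γ (u j) t + iteratedDeriv γ (f j) t := by
      intro γ t
      rw [iteratedDeriv_succ']
      have hder : deriv (u j) = fun s => -c * u j s + f j s := funext fun s => (hODE s).deriv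
      rw [hder]
      exact stmt15_itd_lin husm hfj γ t
    have habsc : ‖-c‖ = A j := by
      rw [hcdef, hAdef]
      simp
    have hbase : ∀ t ∈ Set.Icc (0:ℝ) (2*Real.pi),
        ‖u j t‖ ≤ 2*Real.pi * (C * Real.exp (-ε₀*(j:ℝ)^r)) := by
      intro t ht
      obtain ⟨ht0, ht2⟩ := ht
      rw [hu j t, norm_mul]
      have h1 : ‖Complex.exp (-(Complex.I * (l j:ℂ) * (α:ℂ) * (t:ℂ)))‖ = 1 := by
        rw [Complex.norm_exp]; simp [Complex.mul_re]
      rw [h1, one_mul]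
      have hbnd : ∀ x ∈ Set.uIoc (0:ℝ) t,
          ‖Complex.exp (Complex.I * (l j:ℂ) * (α:ℂ) * (x:ℂ)) * f j x‖
            ≤ C * Real.exp (-ε₀*(j:ℝ)^r) := by
        intro x _
        rw [norm_mul]
        have h2 : ‖Complex.exp (Complex.I * (l j:ℂ) * (α:ℂ) * (x:ℂ))‖ = 1 := by
          rw [Complex.norm_exp]; simp [Complex.mul_re]
        rw [h2, one_mul]
        simpa using hfest j 0 x
      have hib := intervalIntegral.norm_integral_le_of_norm_le_const hbnd
      rw [sub_zero, abs_of_nonneg ht0] at hib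
      calc ‖∫ s in (0:ℝ)..t, Complex.exp (Complex.I * (l j:ℂ) * (α:ℂ) * (s:ℂ)) * f j s‖
          = ‖∫ s in (0:ℝ)..t, Complex.exp (Complex.I * (l j:ℂ) * (α:ℂ) * (s:ℂ)) * f j s‖ := rfl
      _ ≤ (C * Real.exp (-ε₀*(j:ℝ)^r)) * t := hib
      _ ≤ (C * Real.exp (-ε₀*(j:ℝ)^r)) * (2*Real.pi) := by
          apply mul_le_mul_of_nonneg_left ht2 (by positivity)
      _ = 2*Real.pi * (C * Real.exp (-ε₀*(j:ℝ)^r)) := mul_comm _ _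
    intro γ
    induction γ with
    | zero =>
      intro t ht
      simpa using hbase t ht
    | succ γ ih =>
      intro t ht
      rw [hrec γ t]
      have hsum : A j * (∑ k ∈ Finset.range γ, A j^(γ-1-k)
            * (C^(k+1) * ((Nat.factorial k:ℝ))^σ * Real.exp (-ε₀ * (j:ℝ)^r)))
          + (C^(γ+1) * ((Nat.factorial γ:ℝ))^σ * Real.exp (-ε₀ * (j:ℝ)^r))
          = ∑ k ∈ Finset.range (γ+1), A j^(γ-k)
              * (C^(k+1) * ((Nat.factorial k:ℝ))^σ * Real.exp (-ε₀ * (j:ℝ)^r)) := by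
        rw [Finset.sum_range_succ, Finset.mul_sum]
        congr 1
        · apply Finset.sum_congr rfl
          intro k hk
          have hkγ : k < γ := Finset.mem_range.mp hk
          rw [show γ - k = (γ-1-k)+1 from by omega, pow_succ]
          ring
        · rw [Nat.sub_self, pow_zero, one_mul]
      calc ‖-c * iteratedDeriv γ (u j) t + iteratedDeriv γ (f j) t‖
          ≤ ‖-c * iteratedDeriv γ (u j) t‖ + ‖iteratedDeriv γ (f j) t‖ :=
            norm_add_le _ _
      _ = A j * ‖iteratedDeriv γ (u j) t‖ + ‖iteratedDeriv γ (f j) t‖ := by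
            rw [norm_mul, habsc]
      _ ≤ A j * (2*Real.pi * (C * Real.exp (-ε₀ * (j:ℝ)^r)) * (A j)^γ
            + ∑ k ∈ Finset.range γ, (A j)^(γ-1-k)
              * (C^(k+1) * ((Nat.factorial k:ℝ))^σ * Real.exp (-ε₀ * (j:ℝ)^r)))
            + (C^(γ+1) * ((Nat.factorial γ:ℝ))^σ * Real.exp (-ε₀ * (j:ℝ)^r)) :=
            add_le_add (mul_le_mul_of_nonneg_left (ih t ht) (hA0 j)) (hfest j γ t)
      _ = 2*Real.pi * (C * Real.exp (-ε₀ * (j:ℝ)^r)) * (A j)^(γ+1)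
            + (A j * (∑ k ∈ Finset.range γ, A j^(γ-1-k)
                * (C^(k+1) * ((Nat.factorial k:ℝ))^σ * Real.exp (-ε₀ * (j:ℝ)^r)))
              + (C^(γ+1) * ((Nat.factorial γ:ℝ))^σ * Real.exp (-ε₀ * (j:ℝ)^r))) := by
            rw [pow_succ]; ring
      _ = 2*Real.pi * (C * Real.exp (-ε₀ * (j:ℝ)^r)) * (A j)^(γ+1)
            + ∑ k ∈ Finset.range (γ+1), A j^(γ-k)
              * (C^(k+1) * ((Nat.factorial k:ℝ))^σ * Real.exp (-ε₀ * (j:ℝ)^r)) := by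
            rw [hsum]
      _ = 2*Real.pi * (C * Real.exp (-ε₀ * (j:ℝ)^r)) * (A j)^(γ+1)
            + ∑ k ∈ Finset.range (γ+1), A j^((γ+1)-1-k)
              * (C^(k+1) * ((Nat.factorial k:ℝ))^σ * Real.exp (-ε₀ * (j:ℝ)^r)) := by
            simp only [Nat.add_sub_cancel]
  -- Final assembly
  obtain ⟨L, hL1, hKL, hCL⟩ : ∃ L : ℝ, 1 ≤ L ∧ K ≤ L ∧ C ≤ L :=
    ⟨max K C, le_trans hK1 (le_max_left _ _), le_max_left _ _, le_max_right _ _⟩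
  have hL0 : (0:ℝ) < L := lt_of_lt_of_le one_pos hL1
  refine ⟨2 * (2*Real.pi*C + 1) * L, by positivity, ?_⟩
  intro j γ t ht
  have h0 := main j γ t ht
  have hterm : ∀ k ∈ Finset.range γ, (A j)^(γ-1-k)
      * (C^(k+1) * ((Nat.factorial k:ℝ))^σ * Real.exp (-ε₀ * (j:ℝ)^r))
      ≤ L^γ * ((Nat.factorial γ:ℝ))^τ * Real.exp (-(ε₀/2) * (j:ℝ)^r) := by
    intro k hk
    have hkγ : k < γ := Finset.mem_range.mp hk
    have e1 := hKclaim j (γ-1-k)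
    have e2 : ((Nat.factorial k:ℝ))^σ ≤ ((Nat.factorial k:ℝ))^τ :=
      Real.rpow_le_rpow_of_exponent_le (hfact1 k) hτσ
    have e3 : ((Nat.factorial (γ-1-k):ℝ))^((m:ℝ)*μ) ≤ ((Nat.factorial (γ-1-k):ℝ))^τ :=
      Real.rpow_le_rpow_of_exponent_le (hfact1 _) hτm
    have e4 : ((Nat.factorial (γ-1-k):ℝ))^τ * ((Nat.factorial k:ℝ))^τ
        ≤ ((Nat.factorial γ:ℝ))^τ := by
      rw [← Real.mul_rpow (by positivity) (by positivity)]
      apply Real.rpow_le_rpow (by positivity) ?_ hτ0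
      have hfle : Nat.factorial (γ-1-k) * Nat.factorial k ≤ Nat.factorial γ := by
        calc Nat.factorial (γ-1-k) * Nat.factorial k ≤ Nat.factorial ((γ-1-k)+k) :=
              Nat.le_of_dvd (Nat.factorial_pos _)
                (Nat.factorial_mul_factorial_dvd_factorial_add _ _)
        _ ≤ Nat.factorial γ := Nat.factorial_le (by omega)
      exact_mod_cast hfle
    have e5 : K^(γ-1-k) ≤ L^(γ-1-k) := pow_le_pow_left₀ hK0.le hKL _
    have e6 : C^(k+1) ≤ L^(k+1) := pow_le_pow_left₀ hC.le hCL _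
    calc (A j)^(γ-1-k) * (C^(k+1) * ((Nat.factorial k:ℝ))^σ * Real.exp (-ε₀ * (j:ℝ)^r))
        = ((A j)^(γ-1-k) * Real.exp (-ε₀ * (j:ℝ)^r)) * (C^(k+1) * ((Nat.factorial k:ℝ))^σ) := by
          ring
    _ ≤ (K^(γ-1-k) * ((Nat.factorial (γ-1-k):ℝ))^((m:ℝ)*μ) * Real.exp (-(ε₀/2) * (j:ℝ)^r))
          * (L^(k+1) * ((Nat.factorial k:ℝ))^τ) := by
          apply mul_le_mul e1 (mul_le_mul e6 e2 (by positivity) (by positivity))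
            (by positivity) (by positivity)
    _ ≤ (L^(γ-1-k) * ((Nat.factorial (γ-1-k):ℝ))^τ * Real.exp (-(ε₀/2) * (j:ℝ)^r))
          * (L^(k+1) * ((Nat.factorial k:ℝ))^τ) := by
          gcongr
    _ = (L^(γ-1-k) * L^(k+1)) * (((Nat.factorial (γ-1-k):ℝ))^τ * ((Nat.factorial k:ℝ))^τ)
          * Real.exp (-(ε₀/2) * (j:ℝ)^r) := by ring
    _ ≤ (L^(γ-1-k) * L^(k+1)) * ((Nat.factorial γ:ℝ))^τ * Real.exp (-(ε₀/2) * (j:ℝ)^r) := by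
          gcongr
    _ = L^γ * ((Nat.factorial γ:ℝ))^τ * Real.exp (-(ε₀/2) * (j:ℝ)^r) := by
          rw [← pow_add, show (γ-1-k)+(k+1) = γ from by omega]
  have hsumle : ∑ k ∈ Finset.range γ, (A j)^(γ-1-k)
      * (C^(k+1) * ((Nat.factorial k:ℝ))^σ * Real.exp (-ε₀ * (j:ℝ)^r))
      ≤ (γ:ℝ) * (L^γ * ((Nat.factorial γ:ℝ))^τ * Real.exp (-(ε₀/2) * (j:ℝ)^r)) := by
    calc ∑ k ∈ Finset.range γ, (A j)^(γ-1-k)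
        * (C^(k+1) * ((Nat.factorial k:ℝ))^σ * Real.exp (-ε₀ * (j:ℝ)^r))
        ≤ ∑ _k ∈ Finset.range γ, L^γ * ((Nat.factorial γ:ℝ))^τ * Real.exp (-(ε₀/2) * (j:ℝ)^r) :=
          Finset.sum_le_sum hterm
    _ = (γ:ℝ) * (L^γ * ((Nat.factorial γ:ℝ))^τ * Real.exp (-(ε₀/2) * (j:ℝ)^r)) := by
          rw [Finset.sum_const, Finset.card_range, nsmul_eq_mul]
  have hfirst : 2*Real.pi * (C * Real.exp (-ε₀ * (j:ℝ)^r)) * (A j)^γ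
      ≤ 2*Real.pi*C * (L^γ * ((Nat.factorial γ:ℝ))^τ * Real.exp (-(ε₀/2) * (j:ℝ)^r)) := by
    have e1 := hKclaim j γ
    have e3 : ((Nat.factorial γ:ℝ))^((m:ℝ)*μ) ≤ ((Nat.factorial γ:ℝ))^τ :=
      Real.rpow_le_rpow_of_exponent_le (hfact1 _) hτm
    calc 2*Real.pi * (C * Real.exp (-ε₀ * (j:ℝ)^r)) * (A j)^γ
        = 2*Real.pi*C * ((A j)^γ * Real.exp (-ε₀ * (j:ℝ)^r)) := by ring
    _ ≤ 2*Real.pi*C * (K^γ * ((Nat.factorial γ:ℝ))^((m:ℝ)*μ) * Real.exp (-(ε₀/2) * (j:ℝ)^r)) :=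
          mul_le_mul_of_nonneg_left e1 (by positivity)
    _ ≤ 2*Real.pi*C * (L^γ * ((Nat.factorial γ:ℝ))^τ * Real.exp (-(ε₀/2) * (j:ℝ)^r)) := by
          gcongr
  have hfin : 2*Real.pi*C * (L^γ * ((Nat.factorial γ:ℝ))^τ * Real.exp (-(ε₀/2) * (j:ℝ)^r))
      + (γ:ℝ) * (L^γ * ((Nat.factorial γ:ℝ))^τ * Real.exp (-(ε₀/2) * (j:ℝ)^r))
      ≤ (2 * (2*Real.pi*C + 1) * L) ^ (γ + 1) * ((Nat.factorial γ:ℝ))^τ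
          * Real.exp (-(ε₀/2) * (j:ℝ)^r) := by
    have hY : (0:ℝ) ≤ ((Nat.factorial γ:ℝ))^τ * Real.exp (-(ε₀/2) * (j:ℝ)^r) := by positivity
    have hb1 : (2*Real.pi*C+1) ≤ (2*Real.pi*C+1)^(γ+1) :=
      le_self_pow₀ (by nlinarith) (Nat.succ_ne_zero γ)
    have hb2 : ((γ:ℝ)+1) ≤ 2^(γ+1) := by
      have h := (Nat.lt_two_pow_self (n := γ+1)).le
      exact_mod_cast h
    have hb3 : L^γ ≤ L^(γ+1) := pow_le_pow_right₀ hL1 (Nat.le_succ γ)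
    have hkey : (2*Real.pi*C + (γ:ℝ)) * L^γ
        ≤ (2 * (2*Real.pi*C + 1) * L) ^ (γ + 1) := by
      calc (2*Real.pi*C + (γ:ℝ)) * L^γ ≤ ((2*Real.pi*C+1) * ((γ:ℝ)+1)) * L^γ := by
            apply mul_le_mul_of_nonneg_right ?_ (by positivity)
            nlinarith [mul_nonneg (mul_nonneg (mul_nonneg (by norm_num : (0:ℝ) ≤ 2) hπ.le)
              hC.le) (Nat.cast_nonneg γ)]
      _ ≤ ((2*Real.pi*C+1)^(γ+1) * 2^(γ+1)) * L^(γ+1) := by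
            apply mul_le_mul (mul_le_mul hb1 hb2 (by positivity) (by positivity)) hb3
              (by positivity) (by positivity)
      _ = (2 * (2*Real.pi*C + 1) * L) ^ (γ + 1) := by
            rw [mul_pow, mul_pow]; ring
    calc 2*Real.pi*C * (L^γ * ((Nat.factorial γ:ℝ))^τ * Real.exp (-(ε₀/2) * (j:ℝ)^r))
        + (γ:ℝ) * (L^γ * ((Nat.factorial γ:ℝ))^τ * Real.exp (-(ε₀/2) * (j:ℝ)^r))
        = ((2*Real.pi*C + (γ:ℝ)) * L^γ) * (((Nat.factorial γ:ℝ))^τ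
            * Real.exp (-(ε₀/2) * (j:ℝ)^r)) := by ring
    _ ≤ (2 * (2*Real.pi*C + 1) * L) ^ (γ + 1) * (((Nat.factorial γ:ℝ))^τ
            * Real.exp (-(ε₀/2) * (j:ℝ)^r)) := mul_le_mul_of_nonneg_right hkey hY
    _ = (2 * (2*Real.pi*C + 1) * L) ^ (γ + 1) * ((Nat.factorial γ:ℝ))^τ
            * Real.exp (-(ε₀/2) * (j:ℝ)^r) := by ring
  calc ‖iteratedDeriv γ (u j) t‖
      ≤ 2*Real.pi * (C * Real.exp (-ε₀ * (j:ℝ)^r)) * (A j)^γ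
        + ∑ k ∈ Finset.range γ, (A j)^(γ-1-k)
            * (C^(k+1) * ((Nat.factorial k:ℝ))^σ * Real.exp (-ε₀ * (j:ℝ)^r)) := h0
  _ ≤ 2*Real.pi*C * (L^γ * ((Nat.factorial γ:ℝ))^τ * Real.exp (-(ε₀/2) * (j:ℝ)^r))
        + (γ:ℝ) * (L^γ * ((Nat.factorial γ:ℝ))^τ * Real.exp (-(ε₀/2) * (j:ℝ)^r)) :=
        add_le_add hfirst hsumle
  _ ≤ (2 * (2*Real.pi*C + 1) * L) ^ (γ + 1) * ((Nat.factorial γ:ℝ))^τ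
        * Real.exp (-(ε₀/2) * (j:ℝ)^r) := hfin
end
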